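/- arXiv:2306.11183 — 8 statements merged into one kernel-verified Lean document; each statement's English description precedes it below -/
import Mathlib

section
/- Let a ∈ F_q^*, let p be a prime with p ∣ (q − 1), and let t be a positive integer such that X^t − a is irreducible over F_q. Assume further that 4 ∤ tp or q ≡ 1 (mod 4). Then X^{tp} − a is irreducible over F_q if and only if p · ord(a) does not divide q − 1. -/
/-!
By Kummer theory for towers (`X_pow_mul_sub_C_irreducible`), `X ^ (p t) - a` is irreducible as
soon as a root `x` of `X ^ t - a` is not a `p`-th power in `F(x)`. If `x = b ^ p`, taking norms
gives `N(b) ^ p = (-1) ^ (t + 1) a`, and the hypothesis on `4` makes `(-1) ^ (t + 1)` a `p`-th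
power in `F`, so `a` would be a `p`-th power in `F`. Conversely a `p`-th root of `a` in `F`
factors `X ^ (p t) - a`. In the cyclic group `F^*` of order `q - 1`, `a` is a `p`-th power
exactly when `a ^ ((q - 1) / p) = 1`, i.e. when `p * ord a ∣ q - 1`.
-/

open Polynomial IntermediateField

theorem IsCyclic.exists_pow_eq_iff_mul_orderOf_dvd {G : Type*} [CommGroup G] [IsCyclic G]
    [Finite G] {d : ℕ} (hd : d ∣ Nat.card G) (u : G) :
    (∃ v : G, v ^ d = u) ↔ d * orderOf u ∣ Nat.card G := by
  set n := Nat.card G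
  have hdn : d * (n / d) = n := Nat.mul_div_cancel' hd
  have hle : (powMonoidHom d : G →* G).range ≤ (powMonoidHom (n / d)).ker := by
    rintro _ ⟨v, rfl⟩
    simp only [MonoidHom.mem_ker, powMonoidHom_apply, ← pow_mul, hdn]
    exact pow_card_eq_one'
  have hrange : (powMonoidHom d : G →* G).range = (powMonoidHom (n / d)).ker := by
    refine Subgroup.eq_of_le_of_card_ge hle ?_
    rw [card_powMonoidHom_range, card_powMonoidHom_ker, Nat.gcd_eq_right hd,
      Nat.gcd_eq_right (Nat.div_dvd_of_dvd hd)]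
  calc (∃ v : G, v ^ d = u) ↔ u ∈ (powMonoidHom (n / d) : G →* G).ker := by
        rw [← hrange]; rfl
    _ ↔ d * orderOf u ∣ n := by
        rw [MonoidHom.mem_ker, powMonoidHom_apply, ← orderOf_dvd_iff_pow_eq_one,
          Nat.dvd_div_iff_mul_dvd hd]

theorem FiniteField.exists_pow_eq_iff_mul_orderOf_dvd {F : Type*} [Field F] [Fintype F]
    {a : F} (ha : a ≠ 0) {d : ℕ} (hd : d ∣ Fintype.card F - 1) :
    (∃ b : F, b ^ d = a) ↔ d * orderOf a ∣ Fintype.card F - 1 := by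
  have hcard : Nat.card Fˣ = Fintype.card F - 1 := by
    rw [Nat.card_units, Nat.card_eq_fintype_card]
  have hd0 : d ≠ 0 := (Nat.pos_of_dvd_of_pos hd (Nat.sub_pos_of_lt Fintype.one_lt_card)).ne'
  have key := IsCyclic.exists_pow_eq_iff_mul_orderOf_dvd (hcard ▸ hd) (Units.mk0 a ha)
  rw [hcard, ← orderOf_units, Units.val_mk0] at key
  rw [← key]
  constructor
  · rintro ⟨b, rfl⟩
    exact ⟨Units.mk0 b (ne_zero_pow hd0 ha), Units.ext (by simp)⟩
  · rintro ⟨v, hv⟩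
    exact ⟨v, by rw [← Units.val_pow_eq_pow_val, hv, Units.val_mk0]⟩

theorem IntermediateField.AdjoinSimple.norm_gen_of_minpoly_eq_X_pow_sub_C {K L : Type*} [Field K]
    [Field L] [Algebra K L] {x : L} {n : ℕ} {a : K} (hn : n ≠ 0)
    (hx : minpoly K x = X ^ n - C a) :
    Algebra.norm K (AdjoinSimple.gen K x) = (-1) ^ (n + 1) * a := by
  have hint : IsIntegral K x := minpoly.ne_zero_iff.mp (hx ▸ X_pow_sub_C_ne_zero hn.bot_lt a)
  rw [← adjoin.powerBasis_gen hint, Algebra.PowerBasis.norm_gen_eq_coeff_zero_minpoly,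
    adjoin.powerBasis_dim, adjoin.powerBasis_gen, minpoly_gen]
  simp only [hx, coeff_sub, coeff_X_pow, coeff_C_zero, natDegree_X_pow_sub_C, if_neg hn.symm]
  ring

theorem FiniteField.exists_pow_eq_neg_one_pow {F : Type*} [Field F] [Fintype F] {p t : ℕ}
    (hp : p.Prime) (h4 : ¬ 4 ∣ t * p ∨ Fintype.card F % 4 = 1) :
    ∃ e : F, e ^ p = (-1) ^ (t + 1) := by
  rcases Nat.even_or_odd t with ht | ht
  · rw [pow_succ, ht.neg_one_pow, one_mul]
    rcases hp.eq_two_or_odd' with rfl | hodd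
    · have hcard : Fintype.card F % 4 = 1 := h4.resolve_left fun h ↦ h (by
        obtain ⟨s, rfl⟩ := ht; exact ⟨s, by ring⟩)
      obtain ⟨e, he⟩ := isSquare_neg_one_iff.mpr (by omega : Fintype.card F % 4 ≠ 3)
      exact ⟨e, by rw [he, sq]⟩
    · exact ⟨-1, hodd.neg_one_pow⟩
  · exact ⟨1, by rw [one_pow, ht.add_one.neg_one_pow]⟩

/-- Let `a ∈ F_q^*`, `p` a prime with `p ∣ q - 1`, and `t` a positive
integer such that `X ^ t - a` is irreducible over `F_q`.  Assume `4 ∤ t p` or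
`q ≡ 1 (mod 4)`.  Then `X ^ (t p) - a` is irreducible over `F_q` if and only if
`p * ord a` does not divide `q - 1`. -/
theorem stmt4 (q : ℕ) (F : Type*) [Field F] [Fintype F] (hF : Fintype.card F = q)
    (a : F) (ha : a ≠ 0)
    (p : ℕ) (hp : p.Prime) (hpq : p ∣ q - 1)
    (t : ℕ) (ht : 0 < t) (hirr : Irreducible (X ^ t - C a))
    (h4 : ¬ 4 ∣ t * p ∨ q % 4 = 1) :
    Irreducible (X ^ (t * p) - C a) ↔ ¬ p * orderOf a ∣ q - 1 := by
  subst hF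
  rw [← FiniteField.exists_pow_eq_iff_mul_orderOf_dvd ha hpq, not_exists]
  refine ⟨fun h b ↦ pow_ne_of_irreducible_X_pow_sub_C h (dvd_mul_left p t) hp.ne_one b,
    fun hnp ↦ ?_⟩
  rw [mul_comm]
  refine X_pow_mul_sub_C_irreducible hirr fun E _ _ x hx ↦
    X_pow_sub_C_irreducible_of_prime hp fun b hb ↦ ?_
  obtain ⟨e, he⟩ := FiniteField.exists_pow_eq_neg_one_pow (F := F) hp h4
  apply hnp (e * Algebra.norm F b)
  calc (e * Algebra.norm F b) ^ p = (-1) ^ (t + 1) * ((-1) ^ (t + 1) * a) := by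
        rw [mul_pow, he, ← map_pow, hb, AdjoinSimple.norm_gen_of_minpoly_eq_X_pow_sub_C ht.ne' hx]
    _ = a := by rw [← mul_assoc, ← mul_pow, neg_one_mul, neg_neg, one_pow, one_mul]
end

section
/- Let a ∈ F_q^*, let p be a prime with p ∣ (q − 1), and let t be a positive integer such that X^t − a is irreducible over F_q. Assume further that 4 ∤ tp or q ≡ 1 (mod 4). If p divides t, then X^{tp} − a is irreducible over F_q. -/
/-!
By Capelli's composition criterion, `X ^ (t * p) - a` is irreducible as soon as, for a root `x`
of `X ^ t - a`, the polynomial `X ^ p - x` is irreducible over `F(x)`, i.e. `x` is not a `p`-th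
power in `F(x)`. Taking norms, `x = b ^ p` would give `N(b) ^ p = N(x) = (-1) ^ (t + 1) * a`.
For odd `t` this makes `a` a `p`-th power, which the irreducibility of `X ^ t - a` forbids since
`p ∣ t`; for even `t` it makes `-a` a `p`-th power, hence `a` too when `p` is odd, and also when
`p = 2`, because then `4 ∣ t * p` and `q ≡ 1 (mod 4)` makes `-1` a square.
-/

open Polynomial IntermediateField

section Field

variable {K : Type*} [Field K]

theorem norm_adjoinSimple_gen_of_minpoly_eq_X_pow_sub_C {E : Type*} [Field E] [Algebra K E]
    {x : E} {t : ℕ} {a : K} (ht : t ≠ 0) (hx : minpoly K x = X ^ t - C a) :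
    Algebra.norm K (AdjoinSimple.gen K x) = (-1) ^ (t + 1) * a := by
  have hint : IsIntegral K x := minpoly.ne_zero_iff.mp <| hx ▸ X_pow_sub_C_ne_zero (by omega) a
  rw [← adjoin.powerBasis_gen hint, Algebra.PowerBasis.norm_gen_eq_coeff_zero_minpoly]
  simp [minpoly_gen, hx, Ne.symm ht, pow_succ]

theorem X_pow_mul_sub_C_irreducible_of_prime {t p : ℕ} {a : K} (hirr : Irreducible (X ^ t - C a))
    (ht : t ≠ 0) (hp : p.Prime) (hpow : ∀ b : K, b ^ p ≠ (-1) ^ (t + 1) * a) :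
    Irreducible (X ^ (t * p) - C a) := by
  rw [mul_comm]
  refine X_pow_mul_sub_C_irreducible hirr fun E _ _ x hx ↦ X_pow_sub_C_irreducible_of_prime hp ?_
  intro b hb
  apply hpow (Algebra.norm K b)
  rw [← map_pow, hb, norm_adjoinSimple_gen_of_minpoly_eq_X_pow_sub_C ht hx]

theorem pow_ne_neg_one_pow_succ_mul_of_irreducible_X_pow_sub_C {t p : ℕ} {a : K}
    (hirr : Irreducible (X ^ t - C a)) (hp : p.Prime) (hpt : p ∣ t)
    (hsq : p = 2 → Even t → IsSquare (-1 : K)) (b : K) : b ^ p ≠ (-1) ^ (t + 1) * a := by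
  have hnot_pow : ∀ c : K, c ^ p ≠ a := pow_ne_of_irreducible_X_pow_sub_C hirr hpt hp.ne_one
  rcases Nat.even_or_odd t with ht | ht
  · rw [ht.add_one.neg_one_pow, neg_one_mul]
    intro hb
    rcases hp.eq_two_or_odd' with rfl | hp_odd
    · obtain ⟨c, hc⟩ := hsq rfl ht
      exact hnot_pow (c * b) (by rw [mul_pow, sq c, ← hc, hb, neg_one_mul, neg_neg])
    · exact hnot_pow (-b) (by rw [hp_odd.neg_pow, hb, neg_neg])
  · rw [ht.add_one.neg_one_pow, one_mul]
    exact hnot_pow b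

end Field

theorem stmt5_general (q : ℕ) (F : Type*) [Field F] [Fintype F] (hF : Fintype.card F = q)
    (a : F)
    (p : ℕ) (hp : p.Prime)
    (t : ℕ) (ht : 0 < t) (hirr : Irreducible (X ^ t - C a))
    (h4 : ¬ 4 ∣ t * p ∨ q % 4 = 1)
    (hpt : p ∣ t) :
    Irreducible (X ^ (t * p) - C a) := by
  refine X_pow_mul_sub_C_irreducible_of_prime hirr ht.ne' hp
    (pow_ne_neg_one_pow_succ_mul_of_irreducible_X_pow_sub_C hirr hp hpt fun hp2 hte ↦ ?_)
  have h4tp : 4 ∣ t * p := by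
    obtain ⟨k, rfl⟩ := hte
    exact ⟨k, by rw [hp2]; ring⟩
  have hq : q % 4 = 1 := h4.resolve_left (not_not.mpr h4tp)
  rw [FiniteField.isSquare_neg_one_iff, hF, hq]
  decide

/-- Let `a ∈ F_q^*`, `p` a prime with `p ∣ q - 1`, and `t` a positive
integer such that `X ^ t - a` is irreducible over `F_q`.  Assume `4 ∤ t p` or
`q ≡ 1 (mod 4)`.  If `p` divides `t`, then `X ^ (t p) - a` is irreducible over `F_q`. -/
theorem stmt5 (q : ℕ) (F : Type*) [Field F] [Fintype F] (hF : Fintype.card F = q)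
    (a : F) (ha : a ≠ 0)
    (p : ℕ) (hp : p.Prime) (hpq : p ∣ q - 1)
    (t : ℕ) (ht : 0 < t) (hirr : Irreducible (X ^ t - C a))
    (h4 : ¬ 4 ∣ t * p ∨ q % 4 = 1)
    (hpt : p ∣ t) :
    Irreducible (X ^ (t * p) - C a) :=
  stmt5_general q F hF a p hp t ht hirr h4 hpt
end

section
/- Let a ∈ F_q^*, let p be a prime with p ∣ (q − 1), and let t be a positive integer such that X^t − a is irreducible over F_q; assume 4 ∤ tp or q ≡ 1 (mod 4), and assume p · ord(a) ∣ (q − 1). Then there exists b ∈ F_q with b^p = a such that the factorization of X^{tp} − a into monic irreducible factors over F_q is X^{tp} − a = ∏_{j=0}^{p−1} (X^t − ζ_p^j b). Moreover: (i) if p ∤ ord(a), then b = a^r and ord(b) = ord(a), where r = 1 if a = 1 and otherwise r·p ≡ 1 (mod ord(a)); (ii) if p ∣ ord(a), then ord(b) = p · ord(a); and in both cases ord(ζ_p^j b) = p · ord(a) for all 1 ≤ j ≤ p−1. -/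
/-!
Substituting `X ^ t` for `X` in `X ^ p - a = ∏ j, (X - ζ ^ j * b)` gives the factorization. Each
factor `X ^ t - c` with `c ^ p = a` is irreducible: if `β` is a root of one of its irreducible
factors `g`, then `β ^ p` is a root of the irreducible `X ^ t - a`, so `t ∣ [F(β) : F] = deg g`.
If `p ∤ ord a`, Euler's theorem shows that `b = a ^ r` with `r = p ^ (φ(ord a) - 1)` is a
`p`-th root of `a` of the same order. If `p ∣ ord a`, a `p`-th root exists in the cyclic group
`F_qˣ` because `p · ord a ∣ q - 1`, and every `p`-th root of `a` has order `p · ord a`.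
-/

open Polynomial

theorem Polynomial.irreducible_X_pow_sub_C_of_pow_eq {K : Type*} [Field K] {t p : ℕ} {a c : K}
    (hirr : Irreducible (X ^ t - C a)) (hc : c ^ p = a) : Irreducible (X ^ t - C c) := by
  have ht : t ≠ 0 := by
    rintro rfl
    rw [pow_zero, ← C.map_one, ← map_sub] at hirr
    exact not_irreducible_C _ hirr
  obtain ⟨g, hg, hgdvd⟩ := exists_irreducible_of_natDegree_pos (f := X ^ t - C c)
    (by rw [natDegree_X_pow_sub_C]; omega)
  have : Fact (Irreducible g) := ⟨hg⟩
  have : Module.Finite K (AdjoinRoot g) := (AdjoinRoot.powerBasis hg.ne_zero).finite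
  set β := AdjoinRoot.root g
  have hβ : β ^ t = algebraMap K _ c := by
    have : aeval β (X ^ t - C c) = 0 := by rwa [AdjoinRoot.aeval_eq, AdjoinRoot.mk_eq_zero]
    simpa [sub_eq_zero] using this
  have hmin : minpoly K (β ^ p) = X ^ t - C a := by
    refine (minpoly.eq_of_irreducible_of_monic hirr ?_ (monic_X_pow_sub_C a ht)).symm
    rw [map_sub, aeval_X_pow, aeval_C, ← pow_mul, mul_comm, pow_mul, hβ, ← map_pow, hc,
      sub_self]
  have hdeg : t ∣ g.natDegree := by
    simpa [hmin, natDegree_X_pow_sub_C, (AdjoinRoot.powerBasis hg.ne_zero).finrank]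
      using minpoly.degree_dvd (IsIntegral.of_finite K (β ^ p))
  have hle : (X ^ t - C c).natDegree ≤ g.natDegree := by
    rw [natDegree_X_pow_sub_C]
    exact Nat.le_of_dvd hg.natDegree_pos hdeg
  exact (associated_of_dvd_of_natDegree_le hgdvd (X_pow_sub_C_ne_zero (by omega) c)
    hle).irreducible hg

theorem Polynomial.X_pow_mul_sub_C_eq_prod {R : Type*} [CommRing R] [IsDomain R] {p t : ℕ}
    {ζ a b : R} (hζ : IsPrimitiveRoot ζ p) (hp : 0 < p) (hb : b ^ p = a) :
    X ^ (t * p) - C a = ∏ j ∈ Finset.range p, (X ^ t - C (ζ ^ j * b)) := by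
  simpa [prod_comp, ← pow_mul] using congrArg (·.comp (X ^ t)) (X_pow_sub_C_eq_prod hζ hp hb)

theorem orderOf_eq_mul_orderOf_pow_of_dvd {M : Type*} [Monoid M] {p : ℕ} (hp : p.Prime)
    {v : M} (h : p ∣ orderOf (v ^ p)) : orderOf v = p * orderOf (v ^ p) := by
  rw [orderOf_pow' v hp.ne_zero] at h ⊢
  by_cases hpv : p ∣ orderOf v
  · rw [Nat.gcd_eq_right hpv, Nat.mul_div_cancel' hpv]
  · rw [Nat.Coprime.gcd_eq_one ((hp.coprime_iff_not_dvd.2 hpv).symm), Nat.div_one] at h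
    exact absurd h hpv

theorem IsCyclic.exists_pow_eq_of_mul_orderOf_dvd {G : Type*} [Group G] [Finite G] [IsCyclic G]
    {p : ℕ} {u : G} (h : p * orderOf u ∣ Nat.card G) : ∃ v : G, v ^ p = u := by
  obtain ⟨g, hg⟩ := IsCyclic.exists_generator (α := G)
  obtain ⟨k, rfl⟩ := mem_powers_iff_mem_zpowers.mpr (hg u)
  rw [orderOf_pow, orderOf_eq_card_of_forall_mem_zpowers hg] at h
  set d := (Nat.card G).gcd k
  have hd : d ∣ Nat.card G := Nat.gcd_dvd_left _ _
  have hpd : p ∣ d := by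
    refine (Nat.mul_dvd_mul_iff_right (Nat.div_pos (Nat.le_of_dvd Nat.card_pos hd) ?_)).1 ?_
    · exact Nat.gcd_pos_of_pos_left _ Nat.card_pos
    · rwa [Nat.mul_div_cancel' hd]
  have hpk : p ∣ k := hpd.trans (Nat.gcd_dvd_right _ _)
  exact ⟨g ^ (k / p), by rw [← pow_mul, Nat.div_mul_cancel hpk]⟩

theorem FiniteField.exists_pow_eq_of_mul_orderOf_dvd {F : Type*} [Field F] [Fintype F] {p : ℕ}
    {a : F} (ha : a ≠ 0) (h : p * orderOf a ∣ Fintype.card F - 1) : ∃ b : F, b ^ p = a := by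
  obtain ⟨v, hv⟩ := IsCyclic.exists_pow_eq_of_mul_orderOf_dvd (u := Units.mk0 a ha)
    (by rwa [Nat.card_units, Nat.card_eq_fintype_card, ← orderOf_units, Units.val_mk0])
  exact ⟨v, by simpa [Units.ext_iff] using hv⟩

theorem Nat.pow_totient_sub_one_mul_modEq {p e : ℕ} (he : 0 < e) (h : p.Coprime e) :
    p ^ (e.totient - 1) * p ≡ 1 [MOD e] := by
  rw [← pow_succ, Nat.sub_add_cancel (Nat.totient_pos.2 he)]
  exact Nat.ModEq.pow_totient h

theorem pow_pow_totient_sub_one_pow {M : Type*} [Monoid M] {a : M} {p : ℕ}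
    (ha : 0 < orderOf a) (h : p.Coprime (orderOf a)) :
    (a ^ (p ^ ((orderOf a).totient - 1))) ^ p = a := by
  rw [← pow_mul, ← pow_mod_orderOf, Nat.pow_totient_sub_one_mul_modEq ha h, pow_mod_orderOf,
    pow_one]

theorem stmt6_general (q : ℕ) (F : Type*) [Field F] [Fintype F] (hF : Fintype.card F = q)
    (a : F) (ha : a ≠ 0)
    (p : ℕ) (hp : p.Prime)
    (t : ℕ) (ht : 0 < t) (hirr : Irreducible (X ^ t - C a))
    (hdvd : p * orderOf a ∣ q - 1)
    (ζ : F) (hζ : IsPrimitiveRoot ζ p) :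
    ∃ b : F, b ^ p = a ∧
      (X ^ (t * p) - C a : Polynomial F) =
        (∏ j ∈ Finset.range p, (X ^ t - C (ζ ^ j * b))) ∧
      (∀ j ∈ Finset.range p,
        (X ^ t - C (ζ ^ j * b)).Monic ∧ Irreducible (X ^ t - C (ζ ^ j * b))) ∧
      (¬ p ∣ orderOf a →
        ∃ r : ℕ, 0 < r ∧ b = a ^ r ∧ orderOf b = orderOf a ∧
          (a = 1 → r = 1) ∧ (a ≠ 1 → r * p ≡ 1 [MOD orderOf a])) ∧
      (p ∣ orderOf a → orderOf b = p * orderOf a) ∧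
      (∀ j : ℕ, 1 ≤ j → j ≤ p - 1 → orderOf (ζ ^ j * b) = p * orderOf a) := by
  subst hF
  have hroots (b : F) (hb : b ^ p = a) (j : ℕ) : (ζ ^ j * b) ^ p = a := by
    rw [mul_pow, ← pow_mul, mul_comm j p, pow_mul, hζ.pow_eq_one, one_pow, one_mul, hb]
  have hfactors (b : F) (hb : b ^ p = a) (j : ℕ) :
      (X ^ t - C (ζ ^ j * b)).Monic ∧ Irreducible (X ^ t - C (ζ ^ j * b)) :=
    ⟨monic_X_pow_sub_C _ ht.ne', irreducible_X_pow_sub_C_of_pow_eq hirr (hroots b hb j)⟩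
  by_cases hpa : p ∣ orderOf a
  · obtain ⟨b, hb⟩ := FiniteField.exists_pow_eq_of_mul_orderOf_dvd ha hdvd
    have hord (c : F) (hc : c ^ p = a) : orderOf c = p * orderOf a :=
      hc ▸ orderOf_eq_mul_orderOf_pow_of_dvd hp (hc ▸ hpa)
    exact ⟨b, hb, X_pow_mul_sub_C_eq_prod hζ hp.pos hb, fun j _ ↦ hfactors b hb j,
      (absurd hpa ·), fun _ ↦ hord b hb, fun j _ _ ↦ hord _ (hroots b hb j)⟩
  · have he : 0 < orderOf a := Nat.pos_of_ne_zero fun h ↦ by simp [h] at hpa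
    have hcop : p.Coprime (orderOf a) := hp.coprime_iff_not_dvd.2 hpa
    set r := p ^ ((orderOf a).totient - 1) with hr
    have hb : (a ^ r) ^ p = a := pow_pow_totient_sub_one_pow he hcop
    have hordb : orderOf (a ^ r) = orderOf a := Nat.Coprime.orderOf_pow (hcop.symm.pow_right _)
    refine ⟨a ^ r, hb, X_pow_mul_sub_C_eq_prod hζ hp.pos hb, fun j _ ↦ hfactors _ hb j,
      fun _ ↦ ⟨r, pow_pos hp.pos _, rfl, hordb, ?_,
        fun _ ↦ Nat.pow_totient_sub_one_mul_modEq he hcop⟩,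
      (absurd · hpa), fun j hj hjp ↦ ?_⟩
    · rintro rfl
      simp [hr]
    · have hζj : orderOf (ζ ^ j) = p :=
        (hζ.pow_of_coprime j
          (Nat.coprime_of_lt_prime (by omega) (by have := hp.pos; omega) hp).symm).eq_orderOf.symm
      rw [(Commute.all _ _).orderOf_mul_eq_mul_orderOf_of_coprime (by rwa [hζj, hordb]), hζj,
        hordb]

/-- Let `a ∈ F_q^*`, `p` a prime with `p ∣ q - 1`, and `t` a positive
integer such that `X ^ t - a` is irreducible over `F_q`; assume `4 ∤ t p` or
`q ≡ 1 (mod 4)`, and assume `p * ord a ∣ q - 1`.  Then there is `b ∈ F_q` with `b ^ p = a`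
such that `X ^ (t p) - a = ∏_{j=0}^{p-1} (X ^ t - ζ_p^j b)` is the factorization into
monic irreducible factors over `F_q`.  Moreover: (i) if `p ∤ ord a`, then `b = a ^ r` and
`ord b = ord a`, where `r = 1` if `a = 1` and otherwise `r p ≡ 1 (mod ord a)`;
(ii) if `p ∣ ord a`, then `ord b = p * ord a`; and in both cases
`ord (ζ_p^j b) = p * ord a` for all `1 ≤ j ≤ p - 1`. -/
theorem stmt6 (q : ℕ) (F : Type*) [Field F] [Fintype F] (hF : Fintype.card F = q)
    (a : F) (ha : a ≠ 0)
    (p : ℕ) (hp : p.Prime) (hpq : p ∣ q - 1)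
    (t : ℕ) (ht : 0 < t) (hirr : Irreducible (X ^ t - C a))
    (h4 : ¬ 4 ∣ t * p ∨ q % 4 = 1)
    (hdvd : p * orderOf a ∣ q - 1)
    (ζ : F) (hζ : IsPrimitiveRoot ζ p) :
    ∃ b : F, b ^ p = a ∧
      (X ^ (t * p) - C a : Polynomial F) =
        (∏ j ∈ Finset.range p, (X ^ t - C (ζ ^ j * b))) ∧
      (∀ j ∈ Finset.range p,
        (X ^ t - C (ζ ^ j * b)).Monic ∧ Irreducible (X ^ t - C (ζ ^ j * b))) ∧
      (¬ p ∣ orderOf a →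
        ∃ r : ℕ, 0 < r ∧ b = a ^ r ∧ orderOf b = orderOf a ∧
          (a = 1 → r = 1) ∧ (a ≠ 1 → r * p ≡ 1 [MOD orderOf a])) ∧
      (p ∣ orderOf a → orderOf b = p * orderOf a) ∧
      (∀ j : ℕ, 1 ≤ j → j ≤ p - 1 → orderOf (ζ ^ j * b) = p * orderOf a) :=
  stmt6_general q F hF a ha p hp t ht hirr hdvd ζ hζ
end

section
/- Let a ∈ F_q^*, let t be a positive integer such that X^t − a is irreducible over F_q, and let n be a positive integer with rad(n) ∣ (q − 1) and gcd(n, ord(a) · t) = 1. Assume 4 ∤ tn or q ≡ 1 (mod 4), and set d := gcd(n, q − 1) (which equals gcd(n, (q−1)/ord(a))). Then the factorization of X^{tn} − a into monic irreducible factors over F_q is ∏_{v ∣ n/d} ∏_{0 ≤ j ≤ d−1, gcd(j,v)=1} (X^{tv} − ζ_d^j a^{rv}), where r is a positive integer with r = 1 if a = 1 and r·n ≡ 1 (mod ord(a)) otherwise; moreover for all applicable v and j: (i) (ζ_d^j a^{rv})^{n/v} = a, and (ii) ord(ζ_d^j a^{rv}) = ord(a) · d/gcd(j,d). -/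
/-!
Every candidate factor `X ^ (t v) - c`, `c = ζ ^ j a ^ (r v)`, is irreducible by Capelli's
criterion in the form: `X ^ m - c` is irreducible if `c` is not a `p`-th power for any prime
`p ∣ m` and `-1` is a square when `4 ∣ m`. Its proof runs by induction over the primes of `m`,
adjoining a `p`-th root `g` of `c`: an `ℓ`-th root of `g` would give, through the norm
`N(g) = ± c`, an `ℓ`-th root of `c` or of `-c`, and the latter is harmless when `ℓ` is odd or `-1`
is a square. Here `c` is not a `p`-th power for `p ∣ t` because `a` is not and `ord a ∣ ord c`;
for `p ∣ v`, a `p`-th root of `c` would have order `p · ord c`, forcing `p d ∣ q - 1`, whereas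
`d = gcd(n, q - 1)` and `p d ∣ n`.

Each factor divides `X ^ (t n) - a` since `c ^ (n / v) = a`, the factors are pairwise distinct,
and their degrees add up to `t n`: as `rad v ∣ d`, exactly `d φ(v) / v` of the `j < d` are prime
to `v`, and `∑_{v ∣ n/d} φ(v) = n / d`.
-/

open Polynomial IntermediateField Finset

theorem X_pow_sub_C_irreducible_of_forall_prime {K : Type*} [Field K] {n : ℕ} (hn : n ≠ 0)
    {a : K} (ha : ∀ p : ℕ, p.Prime → p ∣ n → ∀ b : K, b ^ p ≠ a)
    (h4 : 4 ∣ n → IsSquare (-1 : K)) :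
    Irreducible (X ^ n - C a) := by
  induction n using induction_on_primes generalizing K a with
  | zero => exact absurd rfl hn
  | one => simpa using irreducible_X_sub_C a
  | prime_mul p n hp IH =>
    rw [mul_comm]
    apply X_pow_mul_sub_C_irreducible
      (X_pow_sub_C_irreducible_of_prime hp (ha p hp (dvd_mul_right _ _)))
    intro E _ _ x hx
    have hx_int : IsIntegral K x := not_not.mp fun h ↦ by
      simpa only [degree_zero, degree_X_pow_sub_C hp.pos,
        WithBot.natCast_ne_bot] using congr_arg degree (hx.symm.trans (dif_neg h))
    have hnorm : Algebra.norm K (AdjoinSimple.gen K x) = (-1) ^ (p + 1) * a := by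
      rw [← adjoin.powerBasis_gen hx_int, Algebra.PowerBasis.norm_gen_eq_coeff_zero_minpoly]
      simp [minpoly_gen, hx, hp.ne_zero.symm, pow_succ]
    refine IH (right_ne_zero_of_mul hn) (fun ℓ hℓ hℓn b hb ↦ ?_) fun h ↦ ?_
    · have hnb : Algebra.norm K b ^ ℓ = (-1) ^ (p + 1) * a := by rw [← map_pow, hb, hnorm]
      rcases hp.eq_two_or_odd' with rfl | hp_odd
      · rcases hℓ.eq_two_or_odd' with rfl | hℓ_odd
        · obtain ⟨i, hi⟩ := h4 (mul_dvd_mul_left 2 hℓn)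
          exact ha 2 Nat.prime_two (dvd_mul_right _ _) (i * Algebra.norm K b) (by
            linear_combination -(Algebra.norm K b) ^ 2 * hi - hnb)
        · exact ha ℓ hℓ (dvd_mul_of_dvd_right hℓn 2) (-Algebra.norm K b) (by
            rw [hℓ_odd.neg_pow, hnb]; ring)
      · exact ha ℓ hℓ (dvd_mul_of_dvd_right hℓn p) (Algebra.norm K b) (by
          rw [hnb, (hp_odd.add_one).neg_one_pow, one_mul])
    · obtain ⟨i, hi⟩ := h4 (dvd_mul_of_dvd_right h p)
      exact ⟨algebraMap K _ i, by rw [← map_mul, ← hi, map_neg, map_one]⟩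

theorem forall_pow_ne_of_orderOf_dvd {R : Type*} [CommRing R] [IsDomain R] {a c : R} {p : ℕ}
    (ha : ∀ y : R, y ^ p ≠ a) (hc : orderOf c ≠ 0) (h : orderOf a ∣ orderOf c) :
    ∀ y : R, y ^ p ≠ c := by
  intro y hy
  have : NeZero (orderOf c) := ⟨hc⟩
  obtain ⟨i, -, hi⟩ :=
    (IsPrimitiveRoot.orderOf c).eq_pow_of_pow_eq_one (orderOf_dvd_iff_pow_eq_one.mp h)
  exact ha (y ^ i) (by rw [← pow_mul, mul_comm, pow_mul, hy, hi])

theorem orderOf_eq_prime_mul_of_pow_eq {G : Type*} [Monoid G] {x y : G} {p : ℕ} (hp : p.Prime)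
    (hy : y ^ p = x) (hpx : p ∣ orderOf x) : orderOf y = p * orderOf x := by
  have hpy : p ∣ orderOf y := hpx.trans (hy ▸ orderOf_pow_dvd p)
  rw [← hy, orderOf_pow_of_dvd hp.ne_zero hpy, Nat.mul_div_cancel' hpy]

theorem orderOf_pow_mul_pow_of_coprime {M : Type*} [CommMonoid M] {ζ a : M} {d k : ℕ} (j : ℕ)
    (hζ : IsPrimitiveRoot ζ d) (hd : d ≠ 0) (hda : d.Coprime (orderOf a))
    (hk : k.Coprime (orderOf a)) :
    orderOf (ζ ^ j * a ^ k) = orderOf a * (d / Nat.gcd j d) := by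
  have hζj : orderOf (ζ ^ j) = d / Nat.gcd j d := by
    rw [(hζ.isOfFinOrder hd).orderOf_pow, ← hζ.eq_orderOf, Nat.gcd_comm]
  have hak : orderOf (a ^ k) = orderOf a := Nat.Coprime.orderOf_pow hk.symm
  have hcop : (orderOf (ζ ^ j)).Coprime (orderOf (a ^ k)) := by
    rw [hζj, hak]
    exact hda.coprime_dvd_left (Nat.div_dvd_of_dvd (Nat.gcd_dvd_right j d))
  rw [(Commute.all _ _).orderOf_mul_eq_mul_orderOf_of_coprime hcop, hζj, hak, mul_comm]

theorem pow_mul_pow_div_eq {M : Type*} [CommMonoid M] {ζ a : M} {d n r v : ℕ} (j : ℕ)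
    (hζ : IsPrimitiveRoot ζ d) (hvd : v * d ∣ n) (ha : a ^ (r * n) = a) :
    (ζ ^ j * a ^ (r * v)) ^ (n / v) = a := by
  obtain ⟨m, rfl⟩ := hvd
  rcases Nat.eq_zero_or_pos v with rfl | hv
  · simpa using ha
  rw [mul_assoc, Nat.mul_div_cancel_left _ hv, mul_pow, ← pow_mul, ← pow_mul,
    show j * (d * m) = d * (j * m) by ring, pow_mul, hζ.pow_eq_one, one_pow, one_mul,
    show r * v * (d * m) = r * (v * d * m) by ring, ha]

theorem FiniteField.orderOf_ne_zero {F : Type*} [Field F] [Fintype F] {c : F} (hc : c ≠ 0) :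
    orderOf c ≠ 0 := by
  have h := orderOf_dvd_of_pow_eq_one (FiniteField.pow_card_sub_one_eq_one c hc)
  have : 1 < Fintype.card F := Fintype.one_lt_card
  intro h0
  rw [h0, zero_dvd_iff] at h
  omega

theorem FiniteField.prime_mul_orderOf_dvd_of_pow_eq {F : Type*} [Field F] [Fintype F]
    {c y : F} {p : ℕ} (hp : p.Prime) (hc : c ≠ 0) (hy : y ^ p = c) (hpc : p ∣ orderOf c) :
    p * orderOf c ∣ Fintype.card F - 1 := by
  have hy0 : y ≠ 0 := by rintro rfl; exact hc (by rw [← hy, zero_pow hp.ne_zero])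
  rw [← orderOf_eq_prime_mul_of_pow_eq hp hy hpc]
  exact orderOf_dvd_of_pow_eq_one (FiniteField.pow_card_sub_one_eq_one y hy0)

theorem Nat.Coprime.gcd_div_right {n e N : ℕ} (hne : n.Coprime e) (heN : e ∣ N) :
    n.gcd (N / e) = n.gcd N := by
  obtain ⟨w, rfl⟩ := heN
  rcases Nat.eq_zero_or_pos e with rfl | he
  · simp_all
  rw [Nat.mul_div_cancel_left w he, hne.symm.gcd_mul_left_cancel_right]

theorem Nat.prime_mul_dvd_of_prime_mul_div_dvd {p g d N : ℕ} (hp : p.Prime) (hpg : ¬ p ∣ g)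
    (hgd : g ∣ d) (hdN : d ∣ N) (h : p * (d / g) ∣ N) : p * d ∣ N := by
  have h1 : p * d ∣ N * g := by
    rw [← Nat.div_mul_cancel hgd, ← mul_assoc]
    exact mul_dvd_mul_right h g
  have h2 : p * d ∣ N * p := by
    rw [mul_comm N]
    exact mul_dvd_mul_left p hdN
  simpa [Nat.gcd_mul_left, Nat.Coprime.gcd_eq_one ((hp.coprime_iff_not_dvd.mpr hpg).symm)]
    using Nat.dvd_gcd h1 h2

theorem Nat.count_mul_of_periodic {P : ℕ → Prop} [DecidablePred P] {a : ℕ}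
    (hP : Function.Periodic P a) (k : ℕ) : Nat.count P (a * k) = k * Nat.count P a := by
  induction k with
  | zero => simp
  | succ k ih =>
    have hshift : (fun i ↦ P (a * k + i)) = P := by
      funext i
      simpa [add_comm, mul_comm] using hP.nat_mul k i
    simp only [mul_add_one, Nat.count_add, ih, hshift, add_one_mul]

theorem Nat.coprime_add_left_iff_of_prod_primeFactors_dvd {v D : ℕ} (hv : v ≠ 0)
    (hD : ∏ p ∈ v.primeFactors, p ∣ D) (j : ℕ) : (j + D).Coprime v ↔ j.Coprime v := by
  have hdvd : ∀ k, k.Prime → k ∣ v → k ∣ D := fun k hk hkv ↦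
    (dvd_prod_of_mem _ (Nat.mem_primeFactors.mpr ⟨hk, hkv, hv⟩)).trans hD
  refine ⟨fun h ↦ Nat.coprime_of_dvd fun k hk hkj hkv ↦ ?_,
    fun h ↦ Nat.coprime_of_dvd fun k hk hkj hkv ↦ ?_⟩
  · exact Nat.not_coprime_of_dvd_of_dvd hk.one_lt (dvd_add hkj (hdvd k hk hkv)) hkv h
  · exact Nat.not_coprime_of_dvd_of_dvd hk.one_lt
      ((Nat.dvd_add_left (hdvd k hk hkv)).mp hkj) hkv h

theorem Nat.card_filter_coprime_range_mul {v D : ℕ} (hv : v ≠ 0)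
    (hD : ∏ p ∈ v.primeFactors, p ∣ D) : #{j ∈ range D | j.Coprime v} * v = D * v.totient := by
  have hperD : Function.Periodic (·.Coprime v) D := fun j ↦
    propext (Nat.coprime_add_left_iff_of_prod_primeFactors_dvd hv hD j)
  have hperv : Function.Periodic (·.Coprime v) v := fun _ ↦ propext Nat.coprime_add_self_left
  have hφ : Nat.count (·.Coprime v) v = v.totient := by
    rw [Nat.count_eq_card_filter_range, Nat.totient_eq_card_coprime]
    simp only [Nat.coprime_comm]
  have h := Nat.count_mul_of_periodic hperD v
  rw [mul_comm, Nat.count_mul_of_periodic hperv, hφ, Nat.count_eq_card_filter_range] at h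
  rw [h, mul_comm]

theorem Nat.sum_divisors_card_filter_coprime_mul {n d : ℕ} (hn : n ≠ 0) (hdn : d ∣ n)
    (hrad : ∏ p ∈ n.primeFactors, p ∣ d) :
    ∑ v ∈ (n / d).divisors, #{j ∈ range d | j.Coprime v} * v = n := by
  have hterm : ∀ v ∈ (n / d).divisors, #{j ∈ range d | j.Coprime v} * v = d * v.totient := by
    intro v hv
    have hvn : v ∣ n := (Nat.dvd_of_mem_divisors hv).trans (Nat.div_dvd_of_dvd hdn)
    exact Nat.card_filter_coprime_range_mul (Nat.pos_of_mem_divisors hv).ne'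
      ((prod_dvd_prod_of_subset _ _ _ (Nat.primeFactors_mono hvn hn)).trans hrad)
  rw [sum_congr rfl hterm, ← mul_sum, Nat.sum_totient, Nat.mul_div_cancel' hdn]

theorem Polynomial.X_pow_sub_C_dvd_X_pow_mul_sub_C {R : Type*} [CommRing R] {c a : R} {k : ℕ}
    (h : c ^ k = a) (m : ℕ) : X ^ m - C c ∣ X ^ (m * k) - C a := by
  simpa only [pow_mul, ← C_pow, h] using sub_dvd_pow_sub_pow (X ^ m) (C c) k

theorem Polynomial.eq_prod_of_monic_irreducible_dvd {K ι : Type*} [Field K] {f : K[X]}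
    {s : Finset ι} {g : ι → K[X]} (hf : f.Monic) (hmonic : ∀ i ∈ s, (g i).Monic)
    (hirr : ∀ i ∈ s, Irreducible (g i)) (hdvd : ∀ i ∈ s, g i ∣ f) (hinj : Set.InjOn g s)
    (hdeg : ∑ i ∈ s, (g i).natDegree = f.natDegree) : f = ∏ i ∈ s, g i := by
  have hcop : (s : Set ι).Pairwise (Function.onFun IsCoprime g) := by
    intro i hi j hj hij
    rw [Function.onFun, (hirr i hi).coprime_iff_not_dvd]
    exact fun h ↦ hij (hinj hi hj (eq_of_monic_of_associated (hmonic i hi) (hmonic j hj)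
      ((hirr i hi).associated_of_dvd (hirr j hj) h)))
  refine eq_of_monic_of_dvd_of_natDegree_le (monic_prod_of_monic _ _ hmonic) hf
    (prod_dvd_of_coprime hcop hdvd) ?_
  rw [natDegree_prod_of_monic _ _ hmonic, hdeg]

theorem X_pow_sub_C_pow_mul_pow_inj {K : Type*} [Field K] {ζ a : K} {t d r v v' j j' : ℕ}
    (ht : t ≠ 0) (hζ : IsPrimitiveRoot ζ d) (ha : a ≠ 0) (hj : j < d) (hj' : j' < d)
    (h : X ^ (t * v) - C (ζ ^ j * a ^ (r * v)) = X ^ (t * v') - C (ζ ^ j' * a ^ (r * v'))) :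
    v = v' ∧ j = j' := by
  have hv : v = v' := by
    have := congrArg natDegree h
    rwa [natDegree_X_pow_sub_C, natDegree_X_pow_sub_C, mul_right_inj' ht] at this
  subst hv
  exact ⟨rfl, hζ.pow_inj hj hj'
    (mul_right_cancel₀ (pow_ne_zero _ ha) (C_inj.mp (sub_right_inj.mp h)))⟩

theorem X_pow_mul_sub_C_eq_prod {K : Type*} [Field K] {a ζ : K} {t n d r : ℕ} (ht : t ≠ 0)
    (hn : n ≠ 0) (ha : a ≠ 0) (hζ : IsPrimitiveRoot ζ d) (hdn : d ∣ n)
    (hrad : ∏ p ∈ n.primeFactors, p ∣ d) (harn : a ^ (r * n) = a)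
    (hirr : ∀ v ∈ (n / d).divisors, ∀ j ∈ (range d).filter (·.Coprime v),
      Irreducible (X ^ (t * v) - C (ζ ^ j * a ^ (r * v)))) :
    X ^ (t * n) - C a = ∏ v ∈ (n / d).divisors, ∏ j ∈ (range d).filter (·.Coprime v),
      (X ^ (t * v) - C (ζ ^ j * a ^ (r * v))) := by
  rw [prod_sigma']
  refine eq_prod_of_monic_irreducible_dvd (monic_X_pow_sub_C _ (mul_ne_zero ht hn))
    (fun x hx ↦ monic_X_pow_sub_C _ (mul_ne_zero ht (Nat.pos_of_mem_divisors
      (mem_sigma.mp hx).1).ne'))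
    (fun x hx ↦ hirr _ (mem_sigma.mp hx).1 _ (mem_sigma.mp hx).2) (fun x hx ↦ ?_)
    (fun x hx y hy hxy ↦ ?_) ?_
  · have hv : x.1 ∣ n / d := Nat.dvd_of_mem_divisors (mem_sigma.mp hx).1
    have hpow := pow_mul_pow_div_eq x.2 hζ (mul_comm d x.1 ▸ Nat.mul_dvd_of_dvd_div hdn hv) harn
    simpa only [mul_assoc, Nat.mul_div_cancel' (hv.trans (Nat.div_dvd_of_dvd hdn))] using
      X_pow_sub_C_dvd_X_pow_mul_sub_C hpow (t * x.1)
  · have hlt : ∀ z ∈ (n / d).divisors.sigma fun v ↦ (range d).filter (·.Coprime v), z.2 < d :=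
      fun z hz ↦ mem_range.mp (mem_filter.mp (mem_sigma.mp hz).2).1
    obtain ⟨h1, h2⟩ := X_pow_sub_C_pow_mul_pow_inj ht hζ ha (hlt x hx) (hlt y hy) hxy
    exact Sigma.ext h1 (heq_of_eq h2)
  · simp only [natDegree_X_pow_sub_C, sum_sigma, sum_const, smul_eq_mul, ← mul_sum]
    rw [Nat.sum_divisors_card_filter_coprime_mul hn hdn hrad]

theorem irreducible_X_pow_sub_C_of_orderOf_eq {F : Type*} [Field F] [Fintype F] {a c : F}
    {t n d v j : ℕ} (ht : t ≠ 0) (hn : n ≠ 0) (hirr : Irreducible (X ^ t - C a))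
    (hrad : ∏ p ∈ n.primeFactors, p ∣ Fintype.card F - 1)
    (h4 : ¬ 4 ∣ t * n ∨ Fintype.card F % 4 = 1) (hd : d = Nat.gcd n (Fintype.card F - 1))
    (hvd : v * d ∣ n) (hjv : j.Coprime v) (hc : c ≠ 0)
    (hord : orderOf c = orderOf a * (d / Nat.gcd j d)) :
    Irreducible (X ^ (t * v) - C c) := by
  have hvn : v ∣ n := dvd_of_mul_right_dvd hvd
  have hv : v ≠ 0 := by rintro rfl; exact hn (Nat.eq_zero_of_zero_dvd hvn)
  refine X_pow_sub_C_irreducible_of_forall_prime (mul_ne_zero ht hv) (fun p hp hptv ↦ ?_)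
    fun h ↦ ?_
  · rcases hp.dvd_mul.mp hptv with hpt | hpv
    · exact forall_pow_ne_of_orderOf_dvd (pow_ne_of_irreducible_X_pow_sub_C hirr hpt hp.ne_one)
        (FiniteField.orderOf_ne_zero hc) (hord ▸ dvd_mul_right _ _)
    intro y hy
    have hpn : p ∣ n := hpv.trans hvn
    have hpN : p ∣ Fintype.card F - 1 :=
      (dvd_prod_of_mem _ (Nat.mem_primeFactors.mpr ⟨hp, hpn, hn⟩)).trans hrad
    have hgd : Nat.gcd j d ∣ d := Nat.gcd_dvd_right j d
    have hpg : ¬ p ∣ Nat.gcd j d := fun h ↦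
      Nat.not_coprime_of_dvd_of_dvd hp.one_lt (h.trans (Nat.gcd_dvd_left j d)) hpv hjv
    have hpdg : p ∣ d / Nat.gcd j d := by
      refine (hp.dvd_mul.mp ?_).resolve_right hpg
      rw [Nat.div_mul_cancel hgd, hd]
      exact Nat.dvd_gcd hpn hpN
    have hpc := FiniteField.prime_mul_orderOf_dvd_of_pow_eq hp hc hy
      (hord ▸ dvd_mul_of_dvd_right hpdg _)
    have hdN : d ∣ Fintype.card F - 1 := hd ▸ Nat.gcd_dvd_right _ _
    have hpdN := Nat.prime_mul_dvd_of_prime_mul_div_dvd hp hpg hgd hdN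
      ((mul_dvd_mul_left p (hord ▸ dvd_mul_left _ _)).trans hpc)
    have hpdd : p * d ∣ d :=
      (Nat.dvd_gcd ((mul_dvd_mul_right hpv d).trans hvd) hpdN).trans hd.symm.dvd
    have hd0 : 0 < d := Nat.pos_of_ne_zero (ne_zero_of_dvd_ne_zero hn (dvd_of_mul_left_dvd hvd))
    nlinarith [Nat.le_of_dvd hd0 hpdd, hp.two_le]
  · rw [FiniteField.isSquare_neg_one_iff]
    rcases h4 with h4 | h4
    · exact absurd (h.trans (mul_dvd_mul_left t hvn)) h4
    · omega

/-- Let `a ∈ F_q^*`, `t` a positive integer such that `X ^ t - a` is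
irreducible over `F_q`, and `n` a positive integer with `rad n ∣ q - 1` and
`gcd(n, ord a * t) = 1`.  Assume `4 ∤ t n` or `q ≡ 1 (mod 4)`, and set
`d := gcd(n, q - 1)` (which equals `gcd(n, (q - 1) / ord a)`).  Then the factorization of
`X ^ (t n) - a` into monic irreducible factors over `F_q` is
`∏_{v ∣ n/d} ∏_{0 ≤ j ≤ d - 1, gcd(j, v) = 1} (X ^ (t v) - ζ_d^j a^(r v))`, where `r` is a
positive integer with `r = 1` if `a = 1` and `r n ≡ 1 (mod ord a)` otherwise; moreover
for all applicable `v, j`: (i) `(ζ_d^j a^(r v))^(n / v) = a`, and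
(ii) `ord (ζ_d^j a^(r v)) = ord a * d / gcd(j, d)`. -/
theorem stmt8 (q : ℕ) (F : Type*) [Field F] [Fintype F] (hF : Fintype.card F = q)
    (a : F) (ha : a ≠ 0)
    (t : ℕ) (ht : 0 < t) (hirr : Irreducible (X ^ t - C a))
    (n : ℕ) (hn : 0 < n) (hrad : (∏ p ∈ n.primeFactors, p) ∣ q - 1)
    (hcop : Nat.Coprime n (orderOf a * t))
    (h4 : ¬ 4 ∣ t * n ∨ q % 4 = 1)
    (d : ℕ) (hd : d = Nat.gcd n (q - 1))
    (ζ : F) (hζ : IsPrimitiveRoot ζ d) :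
    d = Nat.gcd n ((q - 1) / orderOf a) ∧
    ∀ r : ℕ, 0 < r → (a = 1 → r = 1) → (a ≠ 1 → r * n ≡ 1 [MOD orderOf a]) →
      ((X ^ (t * n) - C a : Polynomial F) =
        ∏ v ∈ (n / d).divisors, ∏ j ∈ (Finset.range d).filter (fun j => Nat.Coprime j v),
          (X ^ (t * v) - C (ζ ^ j * a ^ (r * v)))) ∧
      ∀ v ∈ (n / d).divisors, ∀ j ∈ (Finset.range d).filter (fun j => Nat.Coprime j v),
        (X ^ (t * v) - C (ζ ^ j * a ^ (r * v))).Monic ∧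
        Irreducible (X ^ (t * v) - C (ζ ^ j * a ^ (r * v))) ∧
        (ζ ^ j * a ^ (r * v)) ^ (n / v) = a ∧
        orderOf (ζ ^ j * a ^ (r * v)) = orderOf a * (d / Nat.gcd j d) := by
  subst hF
  have hna : n.Coprime (orderOf a) := hcop.coprime_dvd_right (dvd_mul_right _ _)
  have hdn : d ∣ n := hd ▸ Nat.gcd_dvd_left _ _
  have hd0 : d ≠ 0 := ne_zero_of_dvd_ne_zero hn.ne' hdn
  refine ⟨by rw [hd, hna.gcd_div_right (orderOf_dvd_of_pow_eq_one
    (FiniteField.pow_card_sub_one_eq_one a ha))], fun r _ _ har ↦ ?_⟩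
  have hrn : r * n ≡ 1 [MOD orderOf a] := by
    by_cases h1 : a = 1
    · simp [h1, Nat.modEq_one]
    · exact har h1
  have harn : a ^ (r * n) = a := by rw [← pow_mod_orderOf, hrn, pow_mod_orderOf, pow_one]
  have hrna : (r * n).Coprime (orderOf a) := by rw [Nat.Coprime, hrn.gcd_eq, Nat.gcd_one_left]
  have hvd : ∀ v ∈ (n / d).divisors, v * d ∣ n := fun v hv ↦
    mul_comm d v ▸ Nat.mul_dvd_of_dvd_div hdn (Nat.dvd_of_mem_divisors hv)
  have hord : ∀ v ∈ (n / d).divisors, ∀ j,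
      orderOf (ζ ^ j * a ^ (r * v)) = orderOf a * (d / Nat.gcd j d) := fun v hv j ↦
    orderOf_pow_mul_pow_of_coprime j hζ hd0 (hna.coprime_dvd_left hdn)
      (hrna.coprime_dvd_left (mul_dvd_mul_left r (dvd_of_mul_right_dvd (hvd v hv))))
  have hirr' : ∀ v ∈ (n / d).divisors, ∀ j ∈ (range d).filter (·.Coprime v),
      Irreducible (X ^ (t * v) - C (ζ ^ j * a ^ (r * v))) := fun v hv j hj ↦
    irreducible_X_pow_sub_C_of_orderOf_eq ht.ne' hn.ne' hirr hrad h4 hd (hvd v hv)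
      (mem_filter.mp hj).2 (mul_ne_zero (pow_ne_zero _ (hζ.ne_zero hd0)) (pow_ne_zero _ ha))
      (hord v hv j)
  exact ⟨X_pow_mul_sub_C_eq_prod ht.ne' hn.ne' ha hζ hdn
      (hd ▸ Nat.dvd_gcd (Nat.prod_primeFactors_dvd n) hrad) harn hirr',
    fun v hv j hj ↦ ⟨monic_X_pow_sub_C _ (mul_ne_zero ht.ne' (Nat.pos_of_mem_divisors hv).ne'),
      hirr' v hv j hj, pow_mul_pow_div_eq j hζ (hvd v hv) harn, hord v hv j⟩⟩
end

section
/- Let a ∈ F_q^* and let n be a positive integer with rad(n) ∣ q − 1 and such that 4 ∤ n or q ≡ 1 (mod 4). Write n = n_1 · n_2 where rad(n_1) ∣ ord(a) and gcd(n_2, ord(a)) = 1, and set d_1 := gcd(n_1, (q−1)/ord(a)) and d_2 := gcd(n_2, q−1). Then there exists b ∈ F_q with b^{d_1} = a such that the factorization of X^n − a into monic irreducible factors over F_q is ∏_{j=0}^{d_1−1} ∏_{v ∣ n_2/d_2} ∏_{0 ≤ i ≤ d_2−1, gcd(i,v)=1} (X^{(n_1/d_1)·v} − ζ_{d_2}^i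 (ζ_{d_1}^j b)^{rv}), where r is a positive integer with r = 1 if a = 1 and r·n_2 ≡ 1 (mod ord(a)·d_1) otherwise; moreover for all applicable j, v, i: (i) (ζ_{d_2}^i (ζ_{d_1}^j b)^{rv})^{(n_2/v)·d_1} = a, and (ii) ord(ζ_{d_2}^i (ζ_{d_1}^j b)^{rv}) = ord(a) · d_1 · d_2/gcd(i,d_2). -/
/-!
Since `b ^ d₁ = a` and every prime factor of `d₁` divides `ord a`, every `d₁`-th root `ζ₁ ^ j * b`
of `a` has order `ord a * d₁`. Its `r v`-th power keeps that order (`r v` is prime to it), and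
multiplying by `ζ₂ ^ i`, whose order `d₂ / gcd(i, d₂)` is coprime to it, gives (ii); (i) follows
from `a ^ (r n₂) = a`.

Over `F_q`, `X ^ m - c` is irreducible as soon as `c` is not a `p`-th power for any prime `p ∣ m`
and `-1` is a square when `4 ∣ m` (Capelli). For a prime `p ∣ q - 1`, a `p`-th power `c` satisfies
`p * ord c ∣ q - 1`; that is impossible for the constants above because `d₁` and `d₂` are the
full gcds `gcd(n₁, (q - 1) / ord a)` and `gcd(n₂, q - 1)`.

The factors are pairwise distinct, each divides `X ^ n - a` by (i), and their degrees add up to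
`n` because `#{i < d₂ | gcd(i, v) = 1} * v = d₂ * φ v` (every prime of `v` divides `d₂`) and
`∑_{v ∣ n₂ / d₂} φ v = n₂ / d₂`; hence their product is `X ^ n - a`.
-/

open Polynomial Finset

namespace Nat

theorem Coprime.coprime_of_forall_prime_dvd {k m n : ℕ} (h : k.Coprime m)
    (hnm : ∀ p, p.Prime → p ∣ n → p ∣ m) : k.Coprime n :=
  coprime_of_dvd fun p hp hpk hpn ↦
    hp.one_lt.ne' ((h.coprime_dvd_left hpk).eq_one_of_dvd (hnm p hp hpn))

theorem not_mul_gcd_dvd {n m k : ℕ} (hn : n ≠ 0) (hk : k ≠ 1) (h : k ∣ n / n.gcd m) :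
    ¬ k * n.gcd m ∣ m := by
  intro hkm
  have hg : 0 < n.gcd m := Nat.gcd_pos_of_pos_left m (Nat.pos_of_ne_zero hn)
  have hkn : k * n.gcd m ∣ n := by
    rw [mul_comm]; exact Nat.mul_dvd_of_dvd_div (Nat.gcd_dvd_left n m) h
  have : k * n.gcd m ∣ 1 * n.gcd m := by rw [one_mul]; exact Nat.dvd_gcd hkn hkm
  exact hk (Nat.dvd_one.mp ((Nat.mul_dvd_mul_iff_right hg).mp this))

theorem card_filter_coprime_range_mul_s9 (k g : ℕ) :
    #{i ∈ range (k * g) | i.Coprime g} = k * φ g := by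
  induction k with
  | zero => simp
  | succ k ih =>
    have hshift : count (fun i ↦ (k * g + i).Coprime g) g = count (fun i ↦ i.Coprime g) g := by
      simp only [mul_comm k g, coprime_mul_left_add_left]
    rw [← count_eq_card_filter_range] at ih ⊢
    rw [add_mul, one_mul, count_add, ih, hshift, count_eq_card_filter_range, totient,
      add_mul, one_mul]
    simp only [coprime_comm]

theorem totient_mul_eq_of_primeFactors_eq {m n : ℕ} (h : m.primeFactors = n.primeFactors) :
    φ m * n = m * φ n := by
  have hP : 0 < ∏ p ∈ n.primeFactors, p := prod_pos fun p hp ↦ pos_of_mem_primeFactors hp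
  have hm := totient_mul_prod_primeFactors m
  have hn := totient_mul_prod_primeFactors n
  rw [h] at hm
  apply Nat.eq_of_mul_eq_mul_right hP
  calc φ m * n * ∏ p ∈ n.primeFactors, p = n * (m * ∏ p ∈ n.primeFactors, (p - 1)) := by
        rw [← hm]; ring
    _ = m * (φ n * ∏ p ∈ n.primeFactors, p) := by rw [hn]; ring
    _ = m * φ n * ∏ p ∈ n.primeFactors, p := by ring

theorem card_filter_coprime_mul_eq_mul_totient {d v : ℕ} (hv : v ≠ 0)
    (h : ∀ p, p.Prime → p ∣ v → p ∣ d) :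
    #{i ∈ range d | i.Coprime v} * v = d * φ v := by
  set g := v.gcd d
  have hcop : ∀ i : ℕ, i.Coprime v ↔ i.Coprime g := fun i ↦
    ⟨fun hi ↦ hi.coprime_dvd_right (Nat.gcd_dvd_left v d),
      fun hi ↦ hi.coprime_of_forall_prime_dvd fun p hp hpv ↦ Nat.dvd_gcd hpv (h p hp hpv)⟩
  have hg : g.primeFactors = v.primeFactors := by
    ext p
    simp only [mem_primeFactors]
    exact ⟨fun ⟨hp, hpg, _⟩ ↦ ⟨hp, hpg.trans (Nat.gcd_dvd_left v d), hv⟩,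
      fun ⟨hp, hpv, _⟩ ↦ ⟨hp, Nat.dvd_gcd hpv (h p hp hpv), Nat.gcd_ne_zero_left hv⟩⟩
  obtain ⟨k, hk⟩ : g ∣ d := Nat.gcd_dvd_right v d
  rw [filter_congr fun i _ ↦ hcop i, hk, mul_comm g k, card_filter_coprime_range_mul_s9,
    mul_assoc, totient_mul_eq_of_primeFactors_eq hg, mul_assoc]

theorem sum_divisors_sum_filter_coprime (d N k : ℕ) (h : ∀ p, p.Prime → p ∣ N → p ∣ d) :
    ∑ v ∈ N.divisors, ∑ i ∈ range d with i.Coprime v, k * v = k * (d * N) := by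
  calc ∑ v ∈ N.divisors, ∑ i ∈ range d with i.Coprime v, k * v
      = ∑ v ∈ N.divisors, k * (d * φ v) := sum_congr rfl fun v hv ↦ by
        rw [sum_const, smul_eq_mul, mul_left_comm, card_filter_coprime_mul_eq_mul_totient
          (pos_of_mem_divisors hv).ne'
          fun p hp hpv ↦ h p hp (hpv.trans (dvd_of_mem_divisors hv))]
    _ = k * (d * N) := by rw [← mul_sum, ← mul_sum, sum_totient]

end Nat

@[to_additive]
theorem Finset.prod_filter_product_product {α β γ M : Type*} [CommMonoid M] (s : Finset α)
    (t : Finset β) (u : Finset γ) (P : γ → β → Prop) [∀ i v, Decidable (P i v)]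
    (f : α → β → γ → M) :
    ∏ x ∈ (s ×ˢ t ×ˢ u).filter (fun x ↦ P x.2.2 x.2.1), f x.1 x.2.1 x.2.2 =
      ∏ j ∈ s, ∏ v ∈ t, ∏ i ∈ u.filter (fun i ↦ P i v), f j v i := by
  simp only [prod_filter, prod_product]

section Monoid

variable {G : Type*} [Monoid G]

theorem orderOf_eq_prime_mul_orderOf_pow {x : G} {p : ℕ} (hp : p.Prime)
    (h : p ∣ orderOf (x ^ p)) : orderOf x = p * orderOf (x ^ p) := by
  have hpx : p ∣ orderOf x := h.trans (orderOf_pow_dvd p)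
  rw [orderOf_pow_of_dvd hp.ne_zero hpx, Nat.mul_div_cancel' hpx]

theorem orderOf_eq_mul_orderOf_pow {x : G} {d : ℕ}
    (h : ∀ p, p.Prime → p ∣ d → p ∣ orderOf (x ^ d)) : orderOf x = d * orderOf (x ^ d) := by
  induction d using induction_on_primes generalizing x with
  | zero => exact absurd (h 2 Nat.prime_two (dvd_zero 2)) (by simp)
  | one => simp
  | prime_mul p m hp ih =>
    rw [pow_mul] at h ⊢
    have hm := ih fun ℓ hℓ hℓm ↦ h ℓ hℓ (dvd_mul_of_dvd_right hℓm p)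
    have hx := orderOf_eq_prime_mul_orderOf_pow hp <|
      (h p hp (dvd_mul_right p m)).trans (hm ▸ dvd_mul_left _ _)
    rw [hx, hm, mul_assoc]

theorem coprime_and_pow_eq_self_of_modEq {a : G} {r n d : ℕ}
    (hr1 : a = 1 → r = 1) (hrmod : a ≠ 1 → r * n ≡ 1 [MOD orderOf a * d]) :
    r.Coprime (orderOf a * d) ∧ a ^ (r * n) = a := by
  by_cases h : a = 1
  · simp [h, hr1 h]
  · have hmod := hrmod h
    refine ⟨Nat.coprime_of_mul_modEq_one n hmod, ?_⟩
    rw [← pow_mod_orderOf, (hmod.of_mul_right d : r * n % orderOf a = 1 % orderOf a),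
      pow_mod_orderOf, pow_one]

end Monoid

section CommMonoid

variable {M : Type*} [CommMonoid M]

theorem orderOf_pow_mul_pow {ζ u : M} {d k : ℕ} (hζ : IsPrimitiveRoot ζ d) (hd : d ≠ 0)
    (hk : k.Coprime (orderOf u)) (hdu : d.Coprime (orderOf u)) (i : ℕ) :
    orderOf (ζ ^ i * u ^ k) = d / i.gcd d * orderOf u := by
  have hζi : orderOf (ζ ^ i) = d / i.gcd d := by
    rw [(hζ.isOfFinOrder hd).orderOf_pow, ← hζ.eq_orderOf, Nat.gcd_comm]
  have huk : orderOf (u ^ k) = orderOf u := Nat.Coprime.orderOf_pow hk.symm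
  have hcop : (orderOf (ζ ^ i)).Coprime (orderOf (u ^ k)) := by
    rw [hζi, huk]
    exact hdu.coprime_dvd_left (Nat.div_dvd_of_dvd (Nat.gcd_dvd_right i d))
  rw [(Commute.all _ _).orderOf_mul_eq_mul_orderOf_of_coprime hcop, hζi, huk]

theorem pow_mul_pow_pow_eq {ζ u a : M} {d e k n v : ℕ} (hζ : ζ ^ d = 1) (hu : u ^ e = a)
    (ha : a ^ (k * n) = a) (hv : d * v ∣ n) (i : ℕ) :
    (ζ ^ i * u ^ (k * v)) ^ (n / v * e) = a := by
  obtain ⟨w, rfl⟩ := hv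
  rcases Nat.eq_zero_or_pos v with rfl | hv
  · simpa using ha
  have hnv : d * v * w / v = d * w := by
    rw [mul_right_comm, Nat.mul_div_cancel _ hv]
  calc (ζ ^ i * u ^ (k * v)) ^ (d * v * w / v * e)
      = (ζ ^ d) ^ (i * w * e) * (u ^ e) ^ (k * (d * v * w)) := by
        rw [hnv, mul_pow, ← pow_mul, ← pow_mul, ← pow_mul, ← pow_mul]; ring_nf
    _ = a := by rw [hζ, one_pow, one_mul, hu, ha]

theorem IsPrimitiveRoot.pow_mul_pow_inj {ζ ξ : M} {k l : ℕ}
    (hζ : IsPrimitiveRoot ζ k) (hξ : IsPrimitiveRoot ξ l) (hkl : k.Coprime l) {i i' j j' : ℕ}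
    (hi : i < k) (hi' : i' < k) (hj : j < l) (hj' : j' < l)
    (h : ζ ^ i * ξ ^ j = ζ ^ i' * ξ ^ j') : i = i' ∧ j = j' := by
  have hl : ∀ i j, (ζ ^ i * ξ ^ j) ^ l = (ζ ^ l) ^ i := fun i j ↦ by
    rw [mul_pow, pow_right_comm ξ, hξ.pow_eq_one, one_pow, mul_one, pow_right_comm]
  have hii' : i = i' := (hζ.pow_of_coprime l hkl.symm).pow_inj hi hi' <| by
    rw [← hl i j, ← hl i' j', h]
  subst hii'
  exact ⟨rfl, hξ.pow_inj hj hj' ((hζ.isUnit (by omega)).pow i |>.mul_left_cancel h)⟩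

theorem mul_pow_eq_of_pow_eq_one {ζ b a : M} {d : ℕ} (hζ : ζ ^ d = 1) (hb : b ^ d = a) (j : ℕ) :
    (ζ ^ j * b) ^ d = a := by
  rw [mul_pow, pow_right_comm, hζ, one_pow, one_mul, hb]

theorem orderOf_pow_mul_pow_of_pow_eq {a u ζ : M} {d e k : ℕ} (hu : u ^ e = a)
    (he : ∀ p, p.Prime → p ∣ e → p ∣ orderOf a) (hζ : IsPrimitiveRoot ζ d) (hd : d ≠ 0)
    (hk : k.Coprime (orderOf a * e)) (hda : d.Coprime (orderOf a * e)) (i : ℕ) :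
    orderOf (ζ ^ i * u ^ k) = orderOf a * e * (d / i.gcd d) := by
  have hord : orderOf u = orderOf a * e := by
    rw [orderOf_eq_mul_orderOf_pow (hu ▸ he), hu, mul_comm]
  rw [orderOf_pow_mul_pow hζ hd (hord ▸ hk) (hord ▸ hda), hord, mul_comm]

end CommMonoid

theorem IsCyclic.exists_pow_eq_of_orderOf_mul_dvd {G : Type*} [Group G] [IsCyclic G] [Finite G]
    {a : G} {d : ℕ} (h : orderOf a * d ∣ Nat.card G) : ∃ b, b ^ d = a := by
  obtain ⟨g, hg⟩ := IsCyclic.exists_generator (α := G)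
  obtain ⟨s, rfl⟩ : ∃ s : ℕ, g ^ s = a := mem_powers_iff_mem_zpowers.mpr (hg a)
  have hN : orderOf g = Nat.card G := orderOf_eq_card_of_forall_mem_zpowers hg
  have hds : d ∣ s := by
    have := Nat.dvd_div_of_mul_dvd h
    rw [orderOf_pow, hN, Nat.div_div_self (Nat.gcd_dvd_left _ _) Nat.card_pos.ne'] at this
    exact this.trans (Nat.gcd_dvd_right _ _)
  obtain ⟨s', rfl⟩ := hds
  exact ⟨g ^ s', by rw [← pow_mul, mul_comm]⟩

theorem Polynomial.X_pow_sub_C_dvd_of_pow_eq {R : Type*} [CommRing R] {a c : R} {m k n : ℕ}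
    (hn : m * k = n) (h : c ^ k = a) : X ^ m - C c ∣ X ^ n - C a := by
  simpa [← hn, pow_mul, ← h] using sub_dvd_pow_sub_pow (X ^ m) (C c) k

theorem Polynomial.prod_eq_of_forall_monic_irreducible_dvd {K ι : Type*} [Field K]
    {s : Finset ι} {f : ι → K[X]} {P : K[X]} (hP : P.Monic)
    (hf : ∀ i ∈ s, (f i).Monic ∧ Irreducible (f i) ∧ f i ∣ P) (hinj : Set.InjOn f s)
    (hdeg : P.natDegree ≤ ∑ i ∈ s, (f i).natDegree) : ∏ i ∈ s, f i = P := by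
  have hcop : (s : Set ι).Pairwise (Function.onFun IsCoprime f) := fun i hi j hj hij ↦
    (hf i hi).2.1.coprime_iff_not_dvd.mpr fun hdvd ↦ hij <| hinj hi hj <|
      eq_of_monic_of_associated (hf i hi).1 (hf j hj).1
        ((hf i hi).2.1.associated_of_dvd (hf j hj).2.1 hdvd)
  have hmonic : (∏ i ∈ s, f i).Monic := monic_prod_of_monic _ _ fun i hi ↦ (hf i hi).1
  refine eq_of_monic_of_associated hmonic hP <| associated_of_dvd_of_natDegree_le
    (prod_dvd_of_coprime hcop fun i hi ↦ (hf i hi).2.2) hP.ne_zero ?_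
  rwa [natDegree_prod_of_monic _ _ fun i hi ↦ (hf i hi).1]

theorem pow_ne_neg_of_forall_pow_ne {R : Type*} [CommRing R] {ℓ : ℕ} (hℓ : ℓ.Prime) {c : R}
    (hc : ∀ b : R, b ^ ℓ ≠ c) (h2 : ℓ = 2 → IsSquare (-1 : R)) (b : R) : b ^ ℓ ≠ -c := by
  intro hb
  rcases hℓ.eq_two_or_odd' with rfl | hodd
  · obtain ⟨w, hw⟩ := h2 rfl
    exact hc (w * b) (by rw [mul_pow, hb, sq, ← hw]; ring)
  · exact hc (-b) (by rw [hodd.neg_pow, hb, neg_neg])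

/- The induction of `X_pow_sub_C_irreducible_of_odd`: over `K⟮x⟯` with `x ^ p = c`, the norm of an
`ℓ`-th root of `x` would be an `ℓ`-th root of `(-1) ^ (p + 1) * c`. -/
open IntermediateField in
theorem X_pow_sub_C_irreducible_of_isSquare_neg_one {K : Type*} [Field K] {m : ℕ} {c : K}
    (hm : m ≠ 0) (hc : ∀ p, p.Prime → p ∣ m → ∀ b : K, b ^ p ≠ c)
    (h4 : 4 ∣ m → IsSquare (-1 : K)) : Irreducible (X ^ m - C c) := by
  induction m using induction_on_primes generalizing K c with
  | zero => exact absurd rfl hm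
  | one => simpa using irreducible_X_sub_C c
  | prime_mul p m hp ih =>
    rw [mul_comm]
    apply X_pow_mul_sub_C_irreducible
      (X_pow_sub_C_irreducible_of_prime hp (hc p hp (dvd_mul_right p m)))
    intro E _ _ x hx
    have hx_int : IsIntegral K x := not_not.mp fun h ↦ by
      simpa only [degree_zero, degree_X_pow_sub_C hp.pos, WithBot.natCast_ne_bot]
        using congr_arg degree (hx.symm.trans (dif_neg h))
    have hnorm : Algebra.norm K (AdjoinSimple.gen K x) = (-1) ^ (p + 1) * c := by
      rw [← adjoin.powerBasis_gen hx_int, Algebra.PowerBasis.norm_gen_eq_coeff_zero_minpoly]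
      simp [minpoly_gen, hx, hp.ne_zero.symm, pow_succ]
    refine ih (right_ne_zero_of_mul hm) (fun ℓ hℓ hℓm y hy ↦ ?_) fun h4m ↦ ?_
    · have hNy : Algebra.norm K y ^ ℓ = (-1) ^ (p + 1) * c := by rw [← map_pow, hy, hnorm]
      have hcℓ := hc ℓ hℓ (dvd_mul_of_dvd_right hℓm p)
      rcases hp.eq_two_or_odd' with rfl | hodd
      · refine pow_ne_neg_of_forall_pow_ne hℓ hcℓ (fun hℓ2 ↦ h4 ?_) _ (by rw [hNy]; ring)
        exact mul_dvd_mul_left 2 (hℓ2 ▸ hℓm)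
      · exact hcℓ _ (by rw [hNy, hodd.add_one.neg_one_pow, one_mul])
    · obtain ⟨w, hw⟩ := h4 (h4m.mul_left p)
      exact ⟨algebraMap K _ w, by rw [← map_mul, ← hw, map_neg, map_one]⟩

namespace FiniteField

variable {F : Type*} [Field F] [Fintype F]

theorem mul_orderOf_pow_dvd_card_sub_one {p : ℕ} (hp : p ∣ Fintype.card F - 1) {b : F}
    (hb : b ≠ 0) : p * orderOf (b ^ p) ∣ Fintype.card F - 1 :=
  Nat.mul_dvd_of_dvd_div hp <| orderOf_dvd_of_pow_eq_one <| by
    rw [← pow_mul, Nat.mul_div_cancel' hp, pow_card_sub_one_eq_one b hb]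

theorem exists_pow_eq_of_orderOf_mul_dvd {a : F} (ha : a ≠ 0) {d : ℕ}
    (h : orderOf a * d ∣ Fintype.card F - 1) : ∃ b, b ^ d = a := by
  classical
  have hu : orderOf (Units.mk0 a ha) * d ∣ Nat.card Fˣ := by
    rwa [← orderOf_units, Units.val_mk0, Nat.card_eq_fintype_card, Fintype.card_units]
  obtain ⟨b, hb⟩ := IsCyclic.exists_pow_eq_of_orderOf_mul_dvd hu
  exact ⟨b, by rw [← Units.val_pow_eq_pow_val, hb, Units.val_mk0]⟩

theorem X_pow_sub_C_irreducible_of_not_mul_orderOf_dvd {m : ℕ} {c : F} (hm : m ≠ 0) (hc : c ≠ 0)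
    (hp : ∀ p, p.Prime → p ∣ m → p ∣ Fintype.card F - 1 ∧ ¬ p * orderOf c ∣ Fintype.card F - 1)
    (h4 : 4 ∣ m → Fintype.card F % 4 = 1) : Irreducible (X ^ m - C c) := by
  refine X_pow_sub_C_irreducible_of_isSquare_neg_one hm (fun p hp' hpm b hb ↦ ?_)
    fun h ↦ isSquare_neg_one_iff.mpr (by rw [h4 h]; decide)
  have hb0 : b ≠ 0 := by rintro rfl; exact hc (by rw [← hb, zero_pow hp'.ne_zero])
  exact (hp p hp' hpm).2 (hb ▸ mul_orderOf_pow_dvd_card_sub_one (hp p hp' hpm).1 hb0)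

end FiniteField

theorem not_prime_mul_order_dvd {N t n₁ n₂ d₁ d₂ i v p : ℕ} (hp : p.Prime) (hn₁ : n₁ ≠ 0)
    (hn₂ : n₂ ≠ 0) (hd1 : d₁ = n₁.gcd (N / t)) (hd2 : d₂ = n₂.gcd N) (hv : v ∣ n₂ / d₂)
    (hiv : i.Coprime v) (hpm : p ∣ n₁ / d₁ * v) : ¬ p * (t * d₁ * (d₂ / i.gcd d₂)) ∣ N := by
  intro h
  rcases hp.dvd_mul.mp hpm with hpn₁ | hpv
  · refine Nat.not_mul_gcd_dvd hn₁ hp.ne_one (hd1 ▸ hpn₁) (Nat.dvd_div_of_mul_dvd ?_)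
    exact hd1 ▸ (Dvd.intro (d₂ / i.gcd d₂) (by ring)).trans h
  · set g := i.gcd d₂
    set e := d₂ / g
    have hpi : ¬ p ∣ i := fun hpi ↦
      hp.one_lt.ne' (Nat.eq_one_of_dvd_one (hiv ▸ Nat.dvd_gcd hpi hpv))
    have hpg : p.Coprime g :=
      (hp.coprime_iff_not_dvd.mpr hpi).coprime_dvd_right (Nat.gcd_dvd_left i d₂)
    have hd₂ : e * g = d₂ := Nat.div_mul_cancel (Nat.gcd_dvd_right i d₂)
    have hlcm : (e * p).lcm (e * g) ∣ N :=
      Nat.lcm_dvd ((Dvd.intro (t * d₁) (by ring)).trans h) (hd₂ ▸ hd2 ▸ Nat.gcd_dvd_right n₂ N)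
    rw [Nat.lcm_mul_left, hpg.lcm_eq_mul] at hlcm
    have hpd₂ : p * d₂ ∣ N := by rwa [← hd₂, mul_left_comm]
    exact Nat.not_mul_gcd_dvd hn₂ hp.ne_one (hd2 ▸ hpv.trans hv) (hd2 ▸ hpd₂)

theorem factor_injOn {K : Type*} [Field K] {b ζ₁ ζ₂ : K} {d₁ d₂ k r : ℕ} {D : Finset ℕ}
    (hk : k ≠ 0) (hb : b ≠ 0) (hζ₁ : IsPrimitiveRoot ζ₁ d₁) (hζ₂ : IsPrimitiveRoot ζ₂ d₂)
    (hd : d₂.Coprime d₁) (hr : ∀ v ∈ D, (r * v).Coprime d₁) :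
    Set.InjOn
      (fun x : ℕ × ℕ × ℕ ↦ X ^ (k * x.2.1) - C (ζ₂ ^ x.2.2 * (ζ₁ ^ x.1 * b) ^ (r * x.2.1)))
      ↑(range d₁ ×ˢ D ×ˢ range d₂) := by
  rintro ⟨j, v, i⟩ hx ⟨j', v', i'⟩ hx' h
  simp only [coe_product, Set.mem_prod, mem_coe, mem_range] at hx hx' h
  obtain rfl : v = v' := by
    have hdeg := congrArg natDegree h
    simp only [natDegree_X_pow_sub_C] at hdeg
    exact Nat.eq_of_mul_eq_mul_left (Nat.pos_of_ne_zero hk) hdeg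
  have hc := C_injective (sub_right_injective h)
  have hsplit : ∀ j i, ζ₂ ^ i * (ζ₁ ^ j * b) ^ (r * v) =
      ζ₂ ^ i * (ζ₁ ^ (r * v)) ^ j * b ^ (r * v) := fun j i ↦ by ring
  rw [hsplit, hsplit] at hc
  obtain ⟨rfl, rfl⟩ := hζ₂.pow_mul_pow_inj (hζ₁.pow_of_coprime _ (hr v hx.2.1)) hd hx.2.2
    hx'.2.2 hx.1 hx'.1 (mul_right_cancel₀ (pow_ne_zero _ hb) hc)
  rfl

section Factors

variable {F : Type*} [Field F] [Fintype F] {a b ζ₁ ζ₂ : F} {n₁ n₂ d₁ d₂ r : ℕ}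

theorem factor_spec (ha : a ≠ 0) (hn₁ : n₁ ≠ 0) (hn₂ : n₂ ≠ 0)
    (hrad : ∀ p, p.Prime → p ∣ n₁ * n₂ → p ∣ Fintype.card F - 1)
    (h4 : 4 ∣ n₁ * n₂ → Fintype.card F % 4 = 1)
    (hd1 : d₁ = n₁.gcd ((Fintype.card F - 1) / orderOf a))
    (hd2 : d₂ = n₂.gcd (Fintype.card F - 1))
    (hd₁t : ∀ p, p.Prime → p ∣ d₁ → p ∣ orderOf a) (hcop : n₂.Coprime (orderOf a * d₁))
    (hζ₁ : IsPrimitiveRoot ζ₁ d₁) (hζ₂ : IsPrimitiveRoot ζ₂ d₂) (hb : b ^ d₁ = a)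
    (hr : r.Coprime (orderOf a * d₁)) (har : a ^ (r * n₂) = a)
    {v i : ℕ} (hv : v ∈ (n₂ / d₂).divisors) (hiv : i.Coprime v) (j : ℕ) :
    (X ^ (n₁ / d₁ * v) - C (ζ₂ ^ i * (ζ₁ ^ j * b) ^ (r * v))).Monic ∧
      Irreducible (X ^ (n₁ / d₁ * v) - C (ζ₂ ^ i * (ζ₁ ^ j * b) ^ (r * v))) ∧
      (ζ₂ ^ i * (ζ₁ ^ j * b) ^ (r * v)) ^ (n₂ / v * d₁) = a ∧
      orderOf (ζ₂ ^ i * (ζ₁ ^ j * b) ^ (r * v)) = orderOf a * d₁ * (d₂ / i.gcd d₂) := by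
  have hd₁ : d₁ ∣ n₁ := hd1 ▸ Nat.gcd_dvd_left _ _
  have hd₂ : d₂ ∣ n₂ := hd2 ▸ Nat.gcd_dvd_left _ _
  have hd₁0 : d₁ ≠ 0 := ne_zero_of_dvd_ne_zero hn₁ hd₁
  have hv0 : v ≠ 0 := (Nat.pos_of_mem_divisors hv).ne'
  have hd₂v : d₂ * v ∣ n₂ := Nat.mul_dvd_of_dvd_div hd₂ (Nat.dvd_of_mem_divisors hv)
  have hvn₂ : v ∣ n₂ := dvd_of_mul_left_dvd hd₂v
  have hu := mul_pow_eq_of_pow_eq_one hζ₁.pow_eq_one hb j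
  have hpow := pow_mul_pow_pow_eq hζ₂.pow_eq_one hu har hd₂v i
  have hord := orderOf_pow_mul_pow_of_pow_eq hu hd₁t hζ₂ (ne_zero_of_dvd_ne_zero hn₂ hd₂)
    (hr.mul_left (hcop.coprime_dvd_left hvn₂)) (hcop.coprime_dvd_left hd₂) i
  have hm : n₁ / d₁ * v ≠ 0 :=
    mul_ne_zero ((Nat.div_ne_zero_iff_of_dvd hd₁).mpr ⟨hn₁, hd₁0⟩) hv0
  have hmn : n₁ / d₁ * v ∣ n₁ * n₂ := mul_dvd_mul (Nat.div_dvd_of_dvd hd₁) hvn₂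
  have hc : ζ₂ ^ i * (ζ₁ ^ j * b) ^ (r * v) ≠ 0 := fun hc ↦ ha <| by
    rw [← hpow, hc, zero_pow (mul_ne_zero ((Nat.div_ne_zero_iff_of_dvd hvn₂).mpr ⟨hn₂, hv0⟩) hd₁0)]
  refine ⟨monic_X_pow_sub_C _ hm, ?_, hpow, hord⟩
  refine FiniteField.X_pow_sub_C_irreducible_of_not_mul_orderOf_dvd hm hc
    (fun p hp hpm ↦ ⟨hrad p hp (hpm.trans hmn), ?_⟩) fun h ↦ h4 (h.trans hmn)
  rw [hord]
  exact not_prime_mul_order_dvd hp hn₁ hn₂ hd1 hd2 (Nat.dvd_of_mem_divisors hv) hiv hpm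

theorem X_pow_sub_C_eq_prod_factors (ha : a ≠ 0) (hn₁ : n₁ ≠ 0) (hn₂ : n₂ ≠ 0)
    (hrad : ∀ p, p.Prime → p ∣ n₁ * n₂ → p ∣ Fintype.card F - 1)
    (h4 : 4 ∣ n₁ * n₂ → Fintype.card F % 4 = 1)
    (hd1 : d₁ = n₁.gcd ((Fintype.card F - 1) / orderOf a))
    (hd2 : d₂ = n₂.gcd (Fintype.card F - 1))
    (hd₁t : ∀ p, p.Prime → p ∣ d₁ → p ∣ orderOf a) (hcop : n₂.Coprime (orderOf a * d₁))
    (hζ₁ : IsPrimitiveRoot ζ₁ d₁) (hζ₂ : IsPrimitiveRoot ζ₂ d₂) (hb : b ^ d₁ = a)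
    (hr : r.Coprime (orderOf a * d₁)) (har : a ^ (r * n₂) = a) :
    X ^ (n₁ * n₂) - C a = ∏ j ∈ range d₁, ∏ v ∈ (n₂ / d₂).divisors,
      ∏ i ∈ range d₂ with i.Coprime v,
        (X ^ (n₁ / d₁ * v) - C (ζ₂ ^ i * (ζ₁ ^ j * b) ^ (r * v))) := by
  have hd₁ : d₁ ∣ n₁ := hd1 ▸ Nat.gcd_dvd_left _ _
  have hd₂ : d₂ ∣ n₂ := hd2 ▸ Nat.gcd_dvd_left _ _
  have hd₁0 : d₁ ≠ 0 := ne_zero_of_dvd_ne_zero hn₁ hd₁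
  have hvn₂ : ∀ v ∈ (n₂ / d₂).divisors, v ∣ n₂ := fun v hv ↦
    (Nat.dvd_of_mem_divisors hv).trans (Nat.div_dvd_of_dvd hd₂)
  have hn₂d₂ : ∀ p, p.Prime → p ∣ n₂ / d₂ → p ∣ d₂ := fun p hp hpn ↦ by
    have hpn₂ := hpn.trans (Nat.div_dvd_of_dvd hd₂)
    exact hd2 ▸ Nat.dvd_gcd hpn₂ (hrad p hp (dvd_mul_of_dvd_right hpn₂ n₁))
  have hinj := factor_injOn (b := b) (r := r) (D := (n₂ / d₂).divisors)
    ((Nat.div_ne_zero_iff_of_dvd hd₁).mpr ⟨hn₁, hd₁0⟩)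
    (by rintro rfl; exact ha (hb ▸ zero_pow hd₁0))
    hζ₁ hζ₂ ((hcop.coprime_dvd_left hd₂).coprime_dvd_right (dvd_mul_left d₁ _))
    fun v hv ↦ (hr.mul_left (hcop.coprime_dvd_left (hvn₂ v hv))).coprime_dvd_right
      (dvd_mul_left d₁ _)
  rw [← prod_filter_product_product]
  refine (prod_eq_of_forall_monic_irreducible_dvd (monic_X_pow_sub_C _ (mul_ne_zero hn₁ hn₂))
    (fun x hx ↦ ?_) (hinj.mono (filter_subset _ _)) ?_).symm
  · simp only [mem_filter, mem_product] at hx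
    obtain ⟨hmon, hirr, hpow, -⟩ := factor_spec ha hn₁ hn₂ hrad h4 hd1 hd2 hd₁t hcop hζ₁ hζ₂
      hb hr har hx.1.2.1 hx.2 x.1
    refine ⟨hmon, hirr, X_pow_sub_C_dvd_of_pow_eq ?_ hpow⟩
    calc n₁ / d₁ * x.2.1 * (n₂ / x.2.1 * d₁) = d₁ * (n₁ / d₁) * (x.2.1 * (n₂ / x.2.1)) := by
          ring
      _ = n₁ * n₂ := by rw [Nat.mul_div_cancel' hd₁, Nat.mul_div_cancel' (hvn₂ _ hx.1.2.1)]
  · simp only [natDegree_X_pow_sub_C]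
    rw [sum_filter_product_product (range d₁) (n₂ / d₂).divisors (range d₂)
      (fun i v : ℕ ↦ i.Coprime v) (fun _ v _ ↦ n₁ / d₁ * v)]
    rw [sum_congr rfl fun _ _ ↦ Nat.sum_divisors_sum_filter_coprime _ _ _ hn₂d₂, sum_const,
      card_range, smul_eq_mul, Nat.mul_div_cancel' hd₂, ← mul_assoc, Nat.mul_div_cancel' hd₁]

end Factors

/-- Let `a ∈ F_q^*` and `n` a positive integer with `rad n ∣ q - 1` and
(`4 ∤ n` or `q ≡ 1 (mod 4)`).  Write `n = n₁ n₂` with `rad n₁ ∣ ord a` and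
`gcd(n₂, ord a) = 1`, and set `d₁ := gcd(n₁, (q - 1)/ord a)`, `d₂ := gcd(n₂, q - 1)`.
Then there is `b ∈ F_q` with `b ^ d₁ = a` such that the factorization of `X ^ n - a` into
monic irreducible factors over `F_q` is
`∏_{j<d₁} ∏_{v ∣ n₂/d₂} ∏_{i<d₂, gcd(i,v)=1} (X^{(n₁/d₁) v} - ζ_{d₂}^i (ζ_{d₁}^j b)^{r v})`,
where `r = 1` if `a = 1` and `r n₂ ≡ 1 (mod ord a * d₁)` otherwise; moreover
(i) `(ζ_{d₂}^i (ζ_{d₁}^j b)^{r v})^{(n₂/v) d₁} = a` and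
(ii) `ord (ζ_{d₂}^i (ζ_{d₁}^j b)^{r v}) = ord a * d₁ * d₂ / gcd(i, d₂)`. -/
theorem stmt9 (q : ℕ) (F : Type*) [Field F] [Fintype F] (hF : Fintype.card F = q)
    (a : F) (ha : a ≠ 0)
    (n n₁ n₂ : ℕ) (hn : 0 < n) (hn12 : n = n₁ * n₂)
    (hrad : (∏ p ∈ n.primeFactors, p) ∣ q - 1)
    (h4 : ¬ 4 ∣ n ∨ q % 4 = 1)
    (hrad1 : (∏ p ∈ n₁.primeFactors, p) ∣ orderOf a)
    (hcop2 : Nat.Coprime n₂ (orderOf a))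
    (d₁ d₂ : ℕ) (hd1 : d₁ = Nat.gcd n₁ ((q - 1) / orderOf a)) (hd2 : d₂ = Nat.gcd n₂ (q - 1))
    (ζ₁ ζ₂ : F) (hζ1 : IsPrimitiveRoot ζ₁ d₁) (hζ2 : IsPrimitiveRoot ζ₂ d₂) :
    ∃ b : F, b ^ d₁ = a ∧
      ∀ r : ℕ, 0 < r → (a = 1 → r = 1) → (a ≠ 1 → r * n₂ ≡ 1 [MOD orderOf a * d₁]) →
        ((X ^ n - C a : Polynomial F) =
          ∏ j ∈ Finset.range d₁, ∏ v ∈ (n₂ / d₂).divisors,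
            ∏ i ∈ (Finset.range d₂).filter (fun i => Nat.Coprime i v),
              (X ^ ((n₁ / d₁) * v) - C (ζ₂ ^ i * (ζ₁ ^ j * b) ^ (r * v)))) ∧
        ∀ j ∈ Finset.range d₁, ∀ v ∈ (n₂ / d₂).divisors,
          ∀ i ∈ (Finset.range d₂).filter (fun i => Nat.Coprime i v),
            (X ^ ((n₁ / d₁) * v) - C (ζ₂ ^ i * (ζ₁ ^ j * b) ^ (r * v))).Monic ∧
            Irreducible (X ^ ((n₁ / d₁) * v) - C (ζ₂ ^ i * (ζ₁ ^ j * b) ^ (r * v))) ∧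
            (ζ₂ ^ i * (ζ₁ ^ j * b) ^ (r * v)) ^ ((n₂ / v) * d₁) = a ∧
            orderOf (ζ₂ ^ i * (ζ₁ ^ j * b) ^ (r * v)) =
              orderOf a * d₁ * (d₂ / Nat.gcd i d₂) := by
  subst hF hn12
  obtain ⟨hn₁, hn₂⟩ := mul_ne_zero_iff.mp hn.ne'
  have hrad' : ∀ p, p.Prime → p ∣ n₁ * n₂ → p ∣ Fintype.card F - 1 := fun p hp hpn ↦
    (dvd_prod_of_mem _ (Nat.mem_primeFactors.mpr ⟨hp, hpn, hn.ne'⟩)).trans hrad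
  have h4' : 4 ∣ n₁ * n₂ → Fintype.card F % 4 = 1 := fun h ↦ h4.resolve_left (not_not.mpr h)
  have hd₁t : ∀ p, p.Prime → p ∣ d₁ → p ∣ orderOf a := fun p hp hpd ↦
    (dvd_prod_of_mem _ (Nat.mem_primeFactors.mpr
      ⟨hp, hpd.trans (hd1 ▸ Nat.gcd_dvd_left _ _), hn₁⟩)).trans hrad1
  have hcop : n₂.Coprime (orderOf a * d₁) :=
    hcop2.mul_right (hcop2.coprime_of_forall_prime_dvd hd₁t)
  have ht : orderOf a ∣ Fintype.card F - 1 :=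
    orderOf_dvd_of_pow_eq_one (FiniteField.pow_card_sub_one_eq_one a ha)
  obtain ⟨b, hb⟩ := FiniteField.exists_pow_eq_of_orderOf_mul_dvd ha
    (Nat.mul_dvd_of_dvd_div ht (hd1 ▸ Nat.gcd_dvd_right _ _))
  refine ⟨b, hb, fun r _ hr1 hrmod ↦ ?_⟩
  obtain ⟨hr, har⟩ := coprime_and_pow_eq_self_of_modEq hr1 hrmod
  exact ⟨X_pow_sub_C_eq_prod_factors ha hn₁ hn₂ hrad' h4' hd1 hd2 hd₁t hcop hζ1 hζ2 hb hr har,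
    fun j _ v hv i hi ↦ factor_spec ha hn₁ hn₂ hrad' h4' hd1 hd2 hd₁t hcop hζ1 hζ2 hb hr har hv
      (mem_filter.mp hi).2 j⟩
end

section
/- Let a ∈ F_q^* and let t be a positive integer such that the binomial X^t − a is irreducible over F_q. Then the order of X^t − a equals t · ord(a); equivalently, every root of X^t − a in \overline{F}_q has multiplicative order t · ord(a). -/
/-!
Let `b` be a root of `X ^ t - a` and `d = gcd (ord b, t)`. By Bézout, `b ^ d` is a product of
integer powers of `b ^ ord b = 1` and `b ^ t = a`, so `b` is a root of some `X ^ d - c` over `F_q`.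
Since `X ^ t - a` is the minimal polynomial of `b`, this forces `t ≤ d`, i.e. `t ∣ ord b`, and then
`ord a = ord (b ^ t) = ord b / gcd (ord b, t) = ord b / t`. The order of the irreducible polynomial
`X ^ t - a` is the order of any of its roots, since it divides `X ^ e - 1` iff the root satisfies
`b ^ e = 1`.
-/

open Polynomial

theorem Subfield.pow_gcd_mem {L : Type*} [DivisionRing L] (S : Subfield L) {b : L} {m n : ℕ}
    (hm : b ^ m ∈ S) (hn : b ^ n ∈ S) : b ^ m.gcd n ∈ S := by
  rcases eq_or_ne b 0 with rfl | hb
  · rw [zero_pow_eq]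
    split_ifs
    exacts [S.one_mem, S.zero_mem]
  · rw [← zpow_natCast, Nat.gcd_eq_gcd_ab, zpow_add₀ hb, zpow_mul, zpow_mul, zpow_natCast,
      zpow_natCast]
    exact S.mul_mem (S.zpow_mem hm _) (S.zpow_mem hn _)

section

variable {K L : Type*} [Field K] [Field L] [Algebra K L]

theorem natDegree_minpoly_le_of_pow_eq_algebraMap {b : L} {d : ℕ} (hd : d ≠ 0) {c : K}
    (hb : b ^ d = algebraMap K L c) : (minpoly K b).natDegree ≤ d := by
  have hroot : aeval b (X ^ d - C c) = 0 := by simp [hb]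
  simpa using natDegree_le_of_dvd (minpoly.dvd K b hroot) (monic_X_pow_sub_C c hd).ne_zero

theorem minpoly_eq_X_pow_sub_C_of_irreducible {a : K} {t : ℕ} (hirr : Irreducible (X ^ t - C a))
    {b : L} (hb : b ^ t = algebraMap K L a) : minpoly K b = X ^ t - C a := by
  have ht : t ≠ 0 := by simpa using hirr.natDegree_pos.ne'
  exact (minpoly.eq_of_irreducible_of_monic hirr (by simp [hb]) (monic_X_pow_sub_C a ht)).symm

theorem dvd_orderOf_of_irreducible_X_pow_sub_C {a : K} {t : ℕ} (hirr : Irreducible (X ^ t - C a))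
    {b : L} (hb : b ^ t = algebraMap K L a) : t ∣ orderOf b := by
  have ht : 0 < t := by simpa using hirr.natDegree_pos
  set d := (orderOf b).gcd t
  obtain ⟨c, hc⟩ : b ^ d ∈ (algebraMap K L).fieldRange :=
    Subfield.pow_gcd_mem _ (by simp [pow_orderOf_eq_one]) (hb ▸ ⟨a, rfl⟩)
  have htd : t ≤ d :=
    calc t = (minpoly K b).natDegree := by
          rw [minpoly_eq_X_pow_sub_C_of_irreducible hirr hb, natDegree_X_pow_sub_C]
      _ ≤ d := natDegree_minpoly_le_of_pow_eq_algebraMap (Nat.gcd_pos_of_pos_right _ ht).ne' hc.symm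
  have hdt : d = t := (Nat.le_of_dvd ht (Nat.gcd_dvd_right _ _)).antisymm htd
  exact hdt ▸ Nat.gcd_dvd_left _ _

theorem orderOf_eq_mul_orderOf_of_irreducible_X_pow_sub_C {a : K} {t : ℕ}
    (hirr : Irreducible (X ^ t - C a)) {b : L} (hb : b ^ t = algebraMap K L a) :
    orderOf b = t * orderOf a := by
  have ht : t ≠ 0 := by simpa using hirr.natDegree_pos.ne'
  have htb := dvd_orderOf_of_irreducible_X_pow_sub_C hirr hb
  have hordera : orderOf a = orderOf b / t := by
    rw [← orderOf_injective (algebraMap K L : K →* L) (algebraMap K L).injective a,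
      MonoidHom.coe_coe, ← hb, orderOf_pow' b ht, Nat.gcd_eq_right htb]
  rw [hordera, Nat.mul_div_cancel' htb]

end

theorem isLeast_minpoly_dvd_X_pow_sub_one {K L : Type*} [Field K] [Ring L] [Nontrivial L]
    [Algebra K L] {b : L} (hb : IsOfFinOrder b) :
    IsLeast {e : ℕ | 0 < e ∧ minpoly K b ∣ X ^ e - 1} (orderOf b) := by
  have hdvd (e : ℕ) : minpoly K b ∣ X ^ e - 1 ↔ b ^ e = 1 := by
    simp [minpoly.dvd_iff, sub_eq_zero]
  exact ⟨⟨hb.orderOf_pos, (hdvd _).2 (pow_orderOf_eq_one b)⟩,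
    fun e ⟨he, he_dvd⟩ ↦ orderOf_le_of_pow_eq_one he ((hdvd e).1 he_dvd)⟩

theorem stmt10_general (F Ω : Type*) [Field F] [Fintype F]
    [Field Ω] [Algebra F Ω] [IsAlgClosed Ω]
    (a : F) (ha : a ≠ 0)
    (t : ℕ) (ht : 0 < t) (hirr : Irreducible (X ^ t - C a)) :
    IsLeast {e : ℕ | 0 < e ∧ (X ^ t - C a : Polynomial F) ∣ X ^ e - 1} (t * orderOf a) ∧
    ∀ b : Ω, b ^ t = algebraMap F Ω a → orderOf b = t * orderOf a := by
  have horder (b : Ω) (hb : b ^ t = algebraMap F Ω a) : orderOf b = t * orderOf a :=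
    orderOf_eq_mul_orderOf_of_irreducible_X_pow_sub_C hirr hb
  obtain ⟨b, hb⟩ := IsAlgClosed.exists_pow_nat_eq (algebraMap F Ω a) ht
  have ha_fin : IsOfFinOrder a := isOfFinOrder_iff_isUnit.2 ha.isUnit
  have hb_fin : IsOfFinOrder b := by
    rw [← orderOf_pos_iff, horder b hb]
    exact Nat.mul_pos ht ha_fin.orderOf_pos
  refine ⟨?_, horder⟩
  rw [← minpoly_eq_X_pow_sub_C_of_irreducible hirr hb, ← horder b hb]
  exact isLeast_minpoly_dvd_X_pow_sub_one hb_fin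

/-- Let `a ∈ F_q^*` and `t` a positive integer such that `X ^ t - a` is
irreducible over `F_q`.  Then the order of `X ^ t - a` (the least positive `e` with
`X ^ t - a ∣ X ^ e - 1`) equals `t * ord a`; equivalently, every root of `X ^ t - a` in
the algebraic closure has multiplicative order `t * ord a`. -/
theorem stmt10 (q : ℕ) (F Ω : Type*) [Field F] [Fintype F]
    [Field Ω] [Algebra F Ω] [IsAlgClosed Ω]
    (hF : Fintype.card F = q)
    (a : F) (ha : a ≠ 0)
    (t : ℕ) (ht : 0 < t) (hirr : Irreducible (X ^ t - C a)) :
    IsLeast {e : ℕ | 0 < e ∧ (X ^ t - C a : Polynomial F) ∣ X ^ e - 1} (t * orderOf a) ∧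
    ∀ b : Ω, b ^ t = algebraMap F Ω a → orderOf b = t * orderOf a :=
  stmt10_general F Ω a ha t ht hirr
end

section
/- Let a ∈ F_q^* and let n be a positive integer with rad(n) ∣ ord(a). For s ∈ {1,2} set d^{(s)} := gcd(n, (q^s−1)/ord(a)). Then every root of X^n − a in \overline{F}_q has multiplicative order ord(a)·n and is a proper element of F_{q^k} (i.e. lies in F_{q^k} and in no proper subfield containing F_q), where k = n/d^{(1)} if 4 ∤ n or q ≡ 1 (mod 4), and k = 2n/d^{(2)} otherwise. -/
/-!
Passing from `b` to `b ^ n` divides the order by `gcd (ord b, n)`; the quotient `n / gcd` is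
coprime to `ord (b ^ n)` yet all its prime factors divide it, so it is `1` and
`ord b = ord a * n`. The Frobenius `x ↦ x ^ q` generates `Gal(F(b)/F)`, of order `deg b`, so
`deg b ∣ j ↔ b ^ q ^ j = b ↔ ord a * n ∣ q ^ j - 1`, and `deg b` is the order of `q` modulo
`ord a * n`. Every prime `p ∣ n` divides `q - 1`, so lifting the exponent gives
`v_p (q ^ j - 1) = v_p (q - 1) + v_p j` and hence the order `n / d⁽¹⁾`, except at `p = 2` when
`q ≡ 3 (mod 4)`: then `j` must be even and one applies the same count to `q ^ 2`, which gives
`2 n / d⁽²⁾` (and, if `4 ∤ n`, `d⁽²⁾ = 2 d⁽¹⁾`).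
-/

open IntermediateField

theorem Nat.factorization_pow_sub_one {p Q j : ℕ} (hp : p.Prime) (hQ : 1 < Q) (hpQ : p ∣ Q - 1)
    (h2 : p = 2 → 4 ∣ Q - 1) (hj : j ≠ 0) :
    (Q ^ j - 1).factorization p = (Q - 1).factorization p + j.factorization p := by
  have : Fact p.Prime := ⟨hp⟩
  have hpQ' : ¬ p ∣ Q := fun h ↦ hp.one_lt.ne' <| Nat.dvd_one.1 <| by
    simpa [Nat.sub_sub_self hQ.le] using Nat.dvd_sub h hpQ
  simp only [Nat.factorization_def _ hp]
  rcases hp.eq_two_or_odd' with rfl | hodd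
  · have hQj : 1 ≤ Q ^ j := Nat.one_le_pow _ _ (by omega)
    rw [← Nat.cast_inj (R := ℕ∞), Nat.cast_add,
      padicValNat_eq_emultiplicity (Nat.sub_ne_zero_of_lt (Nat.one_lt_pow hj hQ)),
      padicValNat_eq_emultiplicity (by omega), padicValNat_eq_emultiplicity hj,
      ← Int.natCast_emultiplicity, ← Int.natCast_emultiplicity, ← Int.natCast_emultiplicity]
    push_cast [hQj, hQ.le]
    have h4 : (4 : ℤ) ∣ Q - 1 := by
      simpa [Nat.cast_sub hQ.le] using Int.natCast_dvd_natCast.2 (h2 rfl)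
    simpa using Int.two_pow_sub_pow' (x := Q) (y := 1) j h4 (by exact_mod_cast hpQ')
  · simpa using padicValNat.pow_sub_pow (x := Q) (y := 1) hodd hQ (by simpa) hpQ' hj

theorem Nat.mul_dvd_pow_sub_one_iff {Q e n : ℕ} (hQ : 1 < Q) (he : e ∣ Q - 1) (hn : n ≠ 0)
    (hrad : ∀ p, p.Prime → p ∣ n → p ∣ e) (h4 : 2 ∣ n → 4 ∣ Q - 1) (j : ℕ) :
    e * n ∣ Q ^ j - 1 ↔ n / n.gcd ((Q - 1) / e) ∣ j := by
  rcases Nat.eq_zero_or_pos j with rfl | hj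
  · simp
  have hQ1 : Q - 1 ≠ 0 := by omega
  have he0 : e ≠ 0 := by rintro rfl; exact hQ1 (zero_dvd_iff.1 he)
  have hQj : Q ^ j - 1 ≠ 0 := Nat.sub_ne_zero_of_lt (Nat.one_lt_pow hj.ne' hQ)
  have hgn : n.gcd ((Q - 1) / e) ∣ n := Nat.gcd_dvd_left _ _
  have hk0 : n / n.gcd ((Q - 1) / e) ≠ 0 :=
    (Nat.div_ne_zero_iff_of_dvd hgn).2 ⟨hn, Nat.gcd_ne_zero_left hn⟩
  have hA : (Q - 1) / e ≠ 0 := (Nat.div_ne_zero_iff_of_dvd he).2 ⟨hQ1, he0⟩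
  rw [← Nat.factorization_prime_le_iff_dvd (mul_ne_zero he0 hn) hQj,
    ← Nat.factorization_prime_le_iff_dvd hk0 hj.ne']
  refine forall₂_congr fun p hp ↦ ?_
  have hep : e.factorization p ≤ (Q - 1).factorization p :=
    (Nat.factorization_le_iff_dvd he0 hQ1).2 he p
  have hkp : (n / n.gcd ((Q - 1) / e)).factorization p = n.factorization p -
      min (n.factorization p) ((Q - 1).factorization p - e.factorization p) := by
    rw [Nat.factorization_div hgn, Nat.factorization_gcd hn hA, Nat.factorization_div he]; rfl
  rw [Nat.factorization_mul he0 hn, Finsupp.add_apply, hkp]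
  by_cases hpn : p ∣ n
  · rw [Nat.factorization_pow_sub_one hp hQ ((hrad p hp hpn).trans he)
      (fun h ↦ h4 (h ▸ hpn)) hj.ne']
    omega
  · have hQp : (Q - 1).factorization p ≤ (Q ^ j - 1).factorization p :=
      (Nat.factorization_le_iff_dvd hQ1 hQj).2 (by simpa using Nat.sub_dvd_pow_sub_pow Q 1 j) p
    rw [Nat.factorization_eq_zero_of_not_dvd hpn]
    omega

theorem Nat.dvd_two_of_dvd_sub_one_of_dvd_add_one {p q : ℕ} (h₁ : p ∣ q - 1)
    (h₂ : p ∣ q + 1) : p ∣ 2 := by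
  refine (Nat.dvd_sub h₂ h₁).trans ?_
  rcases Nat.eq_zero_or_pos q with rfl | hq
  · exact one_dvd 2
  · rw [show q + 1 - (q - 1) = 2 by omega]

theorem Nat.dvd_pow_sub_one_iff_two_dvd {q m : ℕ} (hq : q % 4 = 3) (hm : 4 ∣ m) (j : ℕ) :
    m ∣ q ^ j - 1 ↔ 2 ∣ j ∧ m ∣ (q ^ 2) ^ (j / 2) - 1 := by
  rw [← pow_mul]
  refine ⟨fun h ↦ ?_, fun ⟨h2, h⟩ ↦ by rwa [Nat.mul_div_cancel' h2] at h⟩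
  have h2 : 2 ∣ j := by
    by_contra hodd
    obtain ⟨i, rfl⟩ : ∃ i, j = 2 * i + 1 := ⟨j / 2, by omega⟩
    have : q ^ (2 * i + 1) % 4 = 3 := by
      rw [Nat.pow_mod, hq, pow_succ, pow_mul, Nat.mul_mod, Nat.pow_mod]
      norm_num
    have := hm.trans h
    omega
  exact ⟨h2, by rwa [Nat.mul_div_cancel' h2]⟩

theorem Nat.gcd_sq_sub_one_div_eq_two_mul {q e n : ℕ} (hq : q % 4 = 3) (hn : n % 4 = 2)
    (he : e ∣ q - 1) (hrad : ∀ p, p.Prime → p ∣ n → p ∣ e) :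
    n.gcd ((q ^ 2 - 1) / e) = 2 * n.gcd ((q - 1) / e) := by
  obtain ⟨A, hA⟩ := he
  have h2e : 2 ∣ e := hrad 2 Nat.prime_two (by omega)
  have he0 : 0 < e := Nat.pos_of_ne_zero <| by rintro rfl; omega
  have hA2 : ¬ 2 ∣ A := fun h ↦ by have := mul_dvd_mul h2e h; omega
  have hsq : q ^ 2 - 1 = e * (A * (q + 1)) := by
    rw [← mul_assoc, ← hA, mul_comm, ← Nat.sq_sub_sq, one_pow]
  rw [hsq, hA, Nat.mul_div_cancel_left _ he0, Nat.mul_div_cancel_left _ he0]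
  have hcop : A.Coprime (q + 1) := Nat.coprime_of_dvd fun p hp hpA hpq ↦ by
    have h2 := (Nat.prime_dvd_prime_iff_eq hp Nat.prime_two).1 <|
      Nat.dvd_two_of_dvd_sub_one_of_dvd_add_one (hA ▸ hpA.mul_left e) hpq
    exact hA2 (h2 ▸ hpA)
  rw [Nat.Coprime.gcd_mul n hcop, mul_comm]
  congr 1
  obtain ⟨m, rfl⟩ : 2 ∣ n := by omega
  obtain ⟨r, hr⟩ : 2 ∣ q + 1 := by omega
  rw [hr, Nat.gcd_mul_left, Nat.Coprime.gcd_eq_one, mul_one]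
  refine Nat.coprime_of_dvd fun p hp hpm hpr ↦ ?_
  have hpe := hrad p hp (hpm.mul_left 2)
  have h2 := (Nat.prime_dvd_prime_iff_eq hp Nat.prime_two).1 <|
    Nat.dvd_two_of_dvd_sub_one_of_dvd_add_one (hA ▸ hpe.mul_right A) (hr ▸ hpr.mul_left 2)
  subst h2
  omega

theorem Nat.mul_dvd_pow_sub_one_iff_dvd {q e n : ℕ} (hq : 1 < q) (he : e ∣ q - 1) (hn : n ≠ 0)
    (hrad : ∀ p, p.Prime → p ∣ n → p ∣ e) (j : ℕ) :
    e * n ∣ q ^ j - 1 ↔ (if ¬ 4 ∣ n ∨ q % 4 = 1 then n / n.gcd ((q - 1) / e)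
      else 2 * n / n.gcd ((q ^ 2 - 1) / e)) ∣ j := by
  have hq_odd : 2 ∣ n → q % 2 = 1 := fun h2n ↦ by
    have := (hrad 2 Nat.prime_two h2n).trans he
    omega
  by_cases h2n_q3 : 2 ∣ n ∧ q % 4 = 3
  · obtain ⟨h2n, hq3⟩ := h2n_q3
    have he2 : e ∣ q ^ 2 - 1 := he.trans (by simpa using Nat.sub_dvd_pow_sub_pow q 1 2)
    have h4 : 4 ∣ q ^ 2 - 1 := by
      have : q ^ 2 % 4 = 1 := by rw [Nat.pow_mod, hq3]
      omega
    have hgn : n.gcd ((q ^ 2 - 1) / e) ∣ n := Nat.gcd_dvd_left _ _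
    have two_mul_dvd_iff (k : ℕ) : 2 ∣ j ∧ k ∣ j / 2 ↔ 2 * k ∣ j := by
      refine ⟨fun ⟨h2, h⟩ ↦ (Nat.dvd_div_iff_mul_dvd h2).1 h, fun h ↦ ?_⟩
      have h2 : 2 ∣ j := (dvd_mul_right 2 k).trans h
      exact ⟨h2, (Nat.dvd_div_iff_mul_dvd h2).2 h⟩
    rw [Nat.dvd_pow_sub_one_iff_two_dvd hq3 (mul_dvd_mul (hrad 2 Nat.prime_two h2n) h2n),
      Nat.mul_dvd_pow_sub_one_iff (Nat.one_lt_pow two_ne_zero hq) he2 hn hrad (fun _ ↦ h4),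
      two_mul_dvd_iff, ← Nat.mul_div_assoc 2 hgn]
    split_ifs
    · rw [Nat.gcd_sq_sub_one_div_eq_two_mul hq3 (by omega) he hrad,
        Nat.mul_div_mul_left _ _ two_pos]
    · rfl
  · have h4 : 2 ∣ n → 4 ∣ q - 1 := fun h2n ↦ by
      have := hq_odd h2n
      omega
    rw [if_pos (by omega), Nat.mul_dvd_pow_sub_one_iff hq he hn hrad h4]

theorem orderOf_eq_orderOf_pow_mul {G : Type*} [Monoid G] {x : G} {n : ℕ} (hn : n ≠ 0)
    (hrad : ∀ p, p.Prime → p ∣ n → p ∣ orderOf (x ^ n)) :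
    orderOf x = orderOf (x ^ n) * n := by
  rw [orderOf_pow' x hn] at hrad ⊢
  rcases Nat.eq_zero_or_pos (orderOf x) with h0 | ht
  · simp [h0]
  have hg : 0 < (orderOf x).gcd n := Nat.gcd_pos_of_pos_left n ht
  have hcop := Nat.coprime_div_gcd_div_gcd hg
  have hgn : (orderOf x).gcd n = n := by
    refine Nat.eq_of_dvd_of_div_eq_one (Nat.gcd_dvd_right _ _) ?_
    refine Nat.eq_one_iff_not_exists_prime_dvd.2 fun p hp hpn ↦ hp.one_lt.ne' ?_
    have hpt := hrad p hp (hpn.trans (Nat.div_dvd_of_dvd (Nat.gcd_dvd_right _ _)))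
    exact Nat.Coprime.eq_one_of_dvd (Nat.Coprime.coprime_dvd_left hpt hcop) hpn
  rw [hgn, Nat.div_mul_cancel (hgn ▸ Nat.gcd_dvd_left _ _)]

theorem pow_eq_self_iff_orderOf_dvd_sub_one {G₀ : Type*} [GroupWithZero G₀] {x : G₀}
    (hx : x ≠ 0) {m : ℕ} (hm : m ≠ 0) : x ^ m = x ↔ orderOf x ∣ m - 1 := by
  rw [orderOf_dvd_iff_pow_eq_one, ← mul_eq_right₀ hx, ← pow_succ,
    Nat.sub_add_cancel (Nat.one_le_iff_ne_zero.2 hm)]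

theorem FiniteField.pow_card_pow_eq_self_iff {F L : Type*} [Field F] [Fintype F] [Field L]
    [Algebra F L] {x : L} (hx : IsIntegral F x) (j : ℕ) :
    x ^ Fintype.card F ^ j = x ↔ (minpoly F x).natDegree ∣ j := by
  have := adjoin.finiteDimensional hx
  have : Finite F⟮x⟯ := Module.finite_of_finite F
  rw [← adjoin.finrank hx, ← FiniteField.orderOf_frobeniusAlgHom F F⟮x⟯,
    orderOf_dvd_iff_pow_eq_one]
  constructor
  · intro h
    refine adjoin_algHom_ext F fun y hy ↦ ?_
    rw [Set.mem_singleton_iff] at hy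
    subst hy
    ext
    simp [AlgHom.coe_pow, FiniteField.coe_frobeniusAlgHom, pow_iterate, h]
  · intro h
    simpa [AlgHom.coe_pow, FiniteField.coe_frobeniusAlgHom, pow_iterate] using
      congr_arg Subtype.val (DFunLike.congr_fun h ⟨x, mem_adjoin_simple_self F x⟩)

theorem FiniteField.natDegree_minpoly_eq_of_orderOf_dvd_iff {F L : Type*} [Field F] [Fintype F]
    [Field L] [Algebra F L] {x : L} (hx : IsOfFinOrder x) {k : ℕ}
    (h : ∀ j, orderOf x ∣ Fintype.card F ^ j - 1 ↔ k ∣ j) :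
    (minpoly F x).natDegree = k := by
  have hint : IsIntegral F x :=
    IsIntegral.of_pow hx.orderOf_pos (by rw [pow_orderOf_eq_one]; exact isIntegral_one)
  have key (j : ℕ) : (minpoly F x).natDegree ∣ j ↔ k ∣ j := by
    rw [← pow_card_pow_eq_self_iff hint, pow_eq_self_iff_orderOf_dvd_sub_one hx.isUnit.ne_zero
      (pow_ne_zero _ Fintype.card_ne_zero), h]
  exact Nat.dvd_antisymm ((key _).2 dvd_rfl) ((key _).1 dvd_rfl)

theorem stmt12_general (q : ℕ) (F Ω : Type*) [Field F] [Fintype F]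
    [Field Ω] [Algebra F Ω]
    (hF : Fintype.card F = q)
    (a : F) (ha : a ≠ 0)
    (n : ℕ) (hn : 0 < n) (hrad : (∏ p ∈ n.primeFactors, p) ∣ orderOf a)
    (d₁ d₂ : ℕ) (hd1 : d₁ = Nat.gcd n ((q - 1) / orderOf a))
    (hd2 : d₂ = Nat.gcd n ((q ^ 2 - 1) / orderOf a))
    (k : ℕ) (hk : k = if ¬ 4 ∣ n ∨ q % 4 = 1 then n / d₁ else 2 * n / d₂) :
    ∀ b : Ω, b ^ n = algebraMap F Ω a →
      orderOf b = orderOf a * n ∧ (minpoly F b).natDegree = k := by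
  intro b hb
  have hq : 1 < q := hF ▸ Fintype.one_lt_card
  have hprime : ∀ p, p.Prime → p ∣ n → p ∣ orderOf a := fun p hp hpn ↦
    (Finset.dvd_prod_of_mem _ (Nat.mem_primeFactors.2 ⟨hp, hpn, hn.ne'⟩)).trans hrad
  have hbn : orderOf (b ^ n) = orderOf a := by
    rw [hb]
    exact orderOf_injective (algebraMap F Ω : F →* Ω) (algebraMap F Ω).injective a
  have hord : orderOf b = orderOf a * n :=
    hbn ▸ orderOf_eq_orderOf_pow_mul hn.ne' (hbn ▸ hprime)
  have he : orderOf a ∣ q - 1 :=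
    hF ▸ orderOf_dvd_of_pow_eq_one (FiniteField.pow_card_sub_one_eq_one a ha)
  have hfin : IsOfFinOrder b := orderOf_pos_iff.1 <| by
    rw [hord]
    exact Nat.mul_pos (Nat.pos_of_dvd_of_pos he (by omega)) hn
  refine ⟨hord, FiniteField.natDegree_minpoly_eq_of_orderOf_dvd_iff hfin fun j ↦ ?_⟩
  rw [hord, hF, Nat.mul_dvd_pow_sub_one_iff_dvd hq he hn.ne' hprime, hk, hd1, hd2]

/-- Let `a ∈ F_q^*` and `n` a positive integer with `rad n ∣ ord a`.
For `s ∈ {1, 2}` set `d⁽ˢ⁾ := gcd(n, (q^s - 1)/ord a)`.  Then every root of `X ^ n - a`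
in the algebraic closure has multiplicative order `ord a * n` and is a proper element of
`F_{q^k}` (its minimal polynomial over `F_q` has degree `k`), where `k = n / d⁽¹⁾` if
`4 ∤ n` or `q ≡ 1 (mod 4)`, and `k = 2 n / d⁽²⁾` otherwise. -/
theorem stmt12 (q : ℕ) (F Ω : Type*) [Field F] [Fintype F]
    [Field Ω] [Algebra F Ω] [IsAlgClosed Ω]
    (hF : Fintype.card F = q)
    (a : F) (ha : a ≠ 0)
    (n : ℕ) (hn : 0 < n) (hrad : (∏ p ∈ n.primeFactors, p) ∣ orderOf a)
    (d₁ d₂ : ℕ) (hd1 : d₁ = Nat.gcd n ((q - 1) / orderOf a))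
    (hd2 : d₂ = Nat.gcd n ((q ^ 2 - 1) / orderOf a))
    (k : ℕ) (hk : k = if ¬ 4 ∣ n ∨ q % 4 = 1 then n / d₁ else 2 * n / d₂) :
    ∀ b : Ω, b ^ n = algebraMap F Ω a →
      orderOf b = orderOf a * n ∧ (minpoly F b).natDegree = k :=
  stmt12_general q F Ω hF a ha n hn hrad d₁ d₂ hd1 hd2 k hk
end

section
/- Let n be a positive integer with gcd(n,q) = 1. Let w := ord_{rad(n)}(q), set s := w if 4 ∤ n or q^w ≡ 1 (mod 4) and s := 2w otherwise, and set d^{(s)} := gcd(n, q^s−1). Then the n-th cyclotomic polynomial Φ_n factors over F_q into exactly φ(d^{(s)})/s monic irreducible factors, each of degree (n/d^{(s)})·s, and this factorization is Φ_n = ∏_{i ∈ 𝓒(q,d^{(s)}), gcd(i,d^{(s)})=1} [ ∑_{l=0}^{s} X^{(n/d^{(s)})·l} · (−1)^{s−l} ∑_{U ⊆ {0,…,s−1}, |U| = s−l} ∏_{u ∈ U} ζ_{d^{(s)}}^{i·q^u} ]. -/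
open Polynomial

/-! Put `m = d⁽ˢ⁾` and `e = n / m`. Every prime factor of `n` divides `q ^ s - 1`, and so does `4`
when `4 ∣ n`. Hence `ord_m(q) = s`, and lifting the exponent gives `ord_n(q ^ s) = e`, so
`ord_n(q) = e s`. Every prime factor of `e` divides `m`, so
`Φ_n(X) = Φ_m(X ^ e) = ∏ (X ^ e - ζ ^ j)`, the product running over the units `j` modulo `m`.
These units fall into `q`-cyclotomic cosets of size `s`, which groups the factors into the
polynomials `∏_{u < s} (X ^ e - (ζ ^ i) ^ (q ^ u))`. Each of them is invariant under `x ↦ x ^ q`,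
hence defined over `F_q`, and it is irreducible because its degree `e s` is `ord_n(q)`, the degree
of every irreducible factor of `Φ_n` over `F_q`. -/

/-- The polynomial `∑_{l=0}^{c} X^{e l} (-1)^{c-l} ∑_{U ⊆ {0,…,c-1}, |U| = c-l} ∏_{u ∈ U} γ^{q^u}`,
i.e. the `q`-spin `∏_{u=0}^{c-1} (X^e - γ^{q^u})` written out coefficientwise. -/
noncomputable def Spoly {Ω : Type*} [Field Ω] (q e c : ℕ) (γ : Ω) : Polynomial Ω :=
  ∑ l ∈ Finset.range (c + 1),
    Polynomial.C ((-1 : Ω) ^ (c - l) *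
      ∑ U ∈ Finset.powersetCard (c - l) (Finset.range c), ∏ u ∈ U, γ ^ q ^ u) *
    Polynomial.X ^ (e * l)

theorem ZMod.natCast_pow_eq_one_iff_dvd {n x t : ℕ} (hx : 0 < x) :
    (x : ZMod n) ^ t = 1 ↔ n ∣ x ^ t - 1 := by
  rw [← Nat.cast_pow, ← Nat.cast_one, ZMod.natCast_eq_natCast_iff, Nat.ModEq.comm,
    Nat.modEq_iff_dvd' (Nat.one_le_pow _ _ hx)]

theorem orderOf_natCast_dvd_iff {n x t : ℕ} (hx : 0 < x) :
    orderOf (x : ZMod n) ∣ t ↔ n ∣ x ^ t - 1 := by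
  rw [orderOf_dvd_iff_pow_eq_one, ZMod.natCast_pow_eq_one_iff_dvd hx]

theorem ZMod.orderOf_natCast_ne_zero {n x : ℕ} (hn : n ≠ 0) (hx : x.Coprime n) :
    orderOf (x : ZMod n) ≠ 0 := by
  have : NeZero n := ⟨hn⟩
  rw [← ZMod.coe_unitOfCoprime x hx, orderOf_units]
  exact (orderOf_pos _).ne'

theorem ZMod.orderOf_natCast_dvd_of_dvd {m n : ℕ} (h : m ∣ n) (x : ℕ) :
    orderOf (x : ZMod m) ∣ orderOf (x : ZMod n) := by
  simpa using orderOf_map_dvd (ZMod.castHom h (ZMod m)).toMonoidHom (x : ZMod n)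

theorem Nat.emultiplicity_pow_sub_one {p x : ℕ} (hp : p.Prime) (hx : 0 < x) (hpx : p ∣ x - 1)
    (h2 : p = 2 → 4 ∣ x - 1) (t : ℕ) :
    emultiplicity p (x ^ t - 1) = emultiplicity p (x - 1) + emultiplicity p t := by
  have hndvd : ¬p ∣ x := fun h =>
    hp.one_lt.ne' (Nat.dvd_one.mp (by simpa [Nat.sub_sub_self hx] using Nat.dvd_sub h hpx))
  obtain rfl | hodd := hp.eq_two_or_odd'
  · have hcast : ∀ y : ℕ, 0 < y → ((y - 1 : ℕ) : ℤ) = (y : ℤ) - 1 := fun y hy => by omega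
    rw [← Int.natCast_emultiplicity, ← Int.natCast_emultiplicity, ← Int.natCast_emultiplicity,
      hcast _ (Nat.pow_pos hx), hcast _ hx, Nat.cast_pow]
    have hx4 : (4 : ℤ) ∣ (x : ℤ) - 1 := hcast x hx ▸ Int.natCast_dvd_natCast.mpr (h2 rfl)
    simpa using Int.two_pow_sub_pow' (y := 1) t (by simpa using hx4) (by exact_mod_cast hndvd)
  · simpa using Nat.emultiplicity_pow_sub_pow hp hodd (y := 1) (by simpa using hpx) hndvd t

theorem Nat.factorization_pow_sub_one_s15 {p x t : ℕ} (hp : p.Prime) (hx : 1 < x) (hpx : p ∣ x - 1)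
    (h2 : p = 2 → 4 ∣ x - 1) (ht : t ≠ 0) :
    (x ^ t - 1).factorization p = (x - 1).factorization p + t.factorization p := by
  have : Fact p.Prime := ⟨hp⟩
  have hxt : x ^ t - 1 ≠ 0 := Nat.sub_ne_zero_of_lt (Nat.one_lt_pow ht hx)
  simp only [Nat.factorization_def _ hp]
  rw [← Nat.cast_inj (R := ℕ∞), Nat.cast_add, padicValNat_eq_emultiplicity hxt,
    padicValNat_eq_emultiplicity (by omega), padicValNat_eq_emultiplicity ht]
  exact Nat.emultiplicity_pow_sub_one hp (by omega) hpx h2 t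

theorem Nat.dvd_pow_sub_one_iff_div_gcd_dvd {n x t : ℕ} (hn : n ≠ 0) (hx : 1 < x)
    (hrad : ∀ p, p.Prime → p ∣ n → p ∣ x - 1) (h4 : 4 ∣ n → 4 ∣ x - 1) (ht : t ≠ 0) :
    n ∣ x ^ t - 1 ↔ n / n.gcd (x - 1) ∣ t := by
  have hx1 : x - 1 ≠ 0 := by omega
  have hxt : x ^ t - 1 ≠ 0 := Nat.sub_ne_zero_of_lt (Nat.one_lt_pow ht hx)
  have hk : n / n.gcd (x - 1) ≠ 0 := (Nat.div_gcd_pos_of_pos_left _ (Nat.pos_of_ne_zero hn)).ne'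
  rw [← Nat.factorization_le_iff_dvd hn hxt, ← Nat.factorization_le_iff_dvd hk ht,
    Nat.factorization_div (Nat.gcd_dvd_left _ _), Nat.factorization_gcd hn hx1]
  refine forall_congr' fun p => ?_
  simp only [Finsupp.coe_tsub, Pi.sub_apply, Finsupp.inf_apply]
  by_cases hp : p.Prime
  swap
  · simp [Nat.factorization_eq_zero_of_not_prime _ hp]
  by_cases hpn : p ∣ n
  swap
  · simp [Nat.factorization_eq_zero_of_not_dvd hpn]
  have hpx := hrad p hp hpn
  by_cases h2 : p = 2 → 4 ∣ x - 1
  · rw [Nat.factorization_pow_sub_one_s15 hp hx hpx h2 ht]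
    omega
  -- otherwise `p = 2` divides `n` and `x - 1` exactly once, and both sides hold
  obtain ⟨rfl, hx4⟩ := Classical.not_imp.mp h2
  have hn2 : n.factorization 2 < 2 := by
    by_contra! h
    exact hx4 (h4 ((hp.pow_dvd_iff_le_factorization hn).mpr h))
  have hx2 := (hp.dvd_iff_one_le_factorization hx1).mp hpx
  have hxt2 := (hp.dvd_iff_one_le_factorization hxt).mp
    (hpx.trans (by simpa using Nat.sub_dvd_pow_sub_pow x 1 t))
  omega

theorem orderOf_natCast_eq_div_gcd {n x : ℕ} (hn : n ≠ 0) (hx : 1 < x)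
    (hrad : ∀ p, p.Prime → p ∣ n → p ∣ x - 1) (h4 : 4 ∣ n → 4 ∣ x - 1) :
    orderOf (x : ZMod n) = n / n.gcd (x - 1) := by
  have hk : n / n.gcd (x - 1) ≠ 0 := (Nat.div_gcd_pos_of_pos_left _ (Nat.pos_of_ne_zero hn)).ne'
  have hdvd : orderOf (x : ZMod n) ∣ n / n.gcd (x - 1) := by
    rw [orderOf_natCast_dvd_iff (by omega), Nat.dvd_pow_sub_one_iff_div_gcd_dvd hn hx hrad h4 hk]
  refine Nat.dvd_antisymm hdvd ((Nat.dvd_pow_sub_one_iff_div_gcd_dvd hn hx hrad h4 ?_).mp ?_)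
  · exact fun h => hk (Nat.eq_zero_of_zero_dvd (h ▸ hdvd))
  · exact (orderOf_natCast_dvd_iff (by omega)).mp dvd_rfl

section

variable {q n w s : ℕ}

theorem orderOf_natCast_prod_primeFactors_ne_zero (hn : n ≠ 0) (hcop : n.Coprime q) :
    orderOf (q : ZMod (∏ p ∈ n.primeFactors, p)) ≠ 0 :=
  have hrad := Nat.prod_primeFactors_dvd n
  ZMod.orderOf_natCast_ne_zero (ne_zero_of_dvd_ne_zero hn hrad) (hcop.coprime_dvd_left hrad).symm

theorem prod_primeFactors_dvd_pow_sub_one (hq : 0 < q)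
    (hw : w = orderOf (q : ZMod (∏ p ∈ n.primeFactors, p)))
    (hs : s = if ¬4 ∣ n ∨ q ^ w % 4 = 1 then w else 2 * w) :
    ∏ p ∈ n.primeFactors, p ∣ q ^ s - 1 := by
  rw [← orderOf_natCast_dvd_iff hq, ← hw, hs]
  split_ifs <;> simp

theorem four_dvd_pow_sub_one_of_four_dvd (hq : 0 < q) (hcop : n.Coprime q)
    (hs : s = if ¬4 ∣ n ∨ q ^ w % 4 = 1 then w else 2 * w) (h4 : 4 ∣ n) : 4 ∣ q ^ s - 1 := by
  have hqw : 0 < q ^ w := Nat.pow_pos hq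
  split_ifs at hs with hcase
  · subst hs
    have : q ^ s % 4 = 1 := by tauto
    omega
  · have hq2 : Odd q := (Nat.coprime_two_left.mp
      (Nat.Coprime.coprime_dvd_left (dvd_trans (by norm_num) h4) hcop))
    have h8 := Nat.eight_dvd_sq_sub_one_of_odd (hq2.pow (n := w))
    rw [hs, mul_comm, pow_mul]
    exact dvd_trans (by norm_num) h8

theorem orderOf_natCast_gcd_pow_sub_one (hq : 0 < q) (hcop : n.Coprime q)
    (hw : w = orderOf (q : ZMod (∏ p ∈ n.primeFactors, p)))
    (hs : s = if ¬4 ∣ n ∨ q ^ w % 4 = 1 then w else 2 * w) :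
    orderOf (q : ZMod (n.gcd (q ^ s - 1))) = s := by
  set o := orderOf (q : ZMod (n.gcd (q ^ s - 1)))
  have hos : o ∣ s := (orderOf_natCast_dvd_iff hq).mpr (Nat.gcd_dvd_right _ _)
  have hrad : ∏ p ∈ n.primeFactors, p ∣ n.gcd (q ^ s - 1) :=
    Nat.dvd_gcd (Nat.prod_primeFactors_dvd n) (prod_primeFactors_dvd_pow_sub_one hq hw hs)
  have hwo : w ∣ o := hw ▸ ZMod.orderOf_natCast_dvd_of_dvd hrad q
  split_ifs at hs with hcase
  · exact Nat.dvd_antisymm hos (hs ▸ hwo)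
  -- here `4 ∣ gcd(n, q ^ s - 1)` while `4 ∤ q ^ w - 1`, so `o ≠ w`
  obtain ⟨h4, hqw⟩ := not_or.mp hcase
  have h4m : 4 ∣ n.gcd (q ^ s - 1) :=
    Nat.dvd_gcd (not_not.mp h4) (four_dvd_pow_sub_one_of_four_dvd hq hcop
      (by rw [if_neg hcase]; exact hs) (not_not.mp h4))
  have how : o ≠ w := fun h => by
    have := h4m.trans ((orderOf_natCast_dvd_iff hq).mp (dvd_of_eq h))
    have : 0 < q ^ w := Nat.pow_pos hq
    omega
  obtain ⟨j, hj⟩ := hwo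
  have hw0 : w ≠ 0 := fun h0 => how (by rw [hj, h0, zero_mul])
  have hj2 : j ∣ 2 := Nat.dvd_of_mul_dvd_mul_left (Nat.pos_of_ne_zero hw0)
    (by rw [← hj, mul_comm w 2, ← hs]; exact hos)
  rcases (Nat.dvd_prime Nat.prime_two).mp hj2 with rfl | rfl
  · exact absurd (by rw [hj, mul_one]) how
  · rw [hj, hs, mul_comm]

theorem prime_dvd_gcd_pow_sub_one (hn : n ≠ 0) (hq : 0 < q)
    (hw : w = orderOf (q : ZMod (∏ p ∈ n.primeFactors, p)))
    (hs : s = if ¬4 ∣ n ∨ q ^ w % 4 = 1 then w else 2 * w) {p : ℕ} (hp : p.Prime)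
    (hpn : p ∣ n) : p ∣ n.gcd (q ^ s - 1) :=
  Nat.dvd_gcd hpn <| (Finset.dvd_prod_of_mem _ (Nat.mem_primeFactors.mpr ⟨hp, hpn, hn⟩)).trans
    (prod_primeFactors_dvd_pow_sub_one hq hw hs)

theorem orderOf_natCast_eq_div_gcd_mul (hn : n ≠ 0) (hq : 1 < q) (hcop : n.Coprime q)
    (hw : w = orderOf (q : ZMod (∏ p ∈ n.primeFactors, p)))
    (hs : s = if ¬4 ∣ n ∨ q ^ w % 4 = 1 then w else 2 * w) (hs0 : s ≠ 0) :
    orderOf (q : ZMod n) = n / n.gcd (q ^ s - 1) * s := by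
  have hsdvd : s ∣ orderOf (q : ZMod n) := orderOf_natCast_gcd_pow_sub_one (by omega) hcop hw hs ▸
    ZMod.orderOf_natCast_dvd_of_dvd (Nat.gcd_dvd_left _ _) q
  have hpow : orderOf ((q ^ s : ℕ) : ZMod n) = n / n.gcd (q ^ s - 1) :=
    orderOf_natCast_eq_div_gcd hn (Nat.one_lt_pow hs0 hq)
      (fun p hp hpn => (prime_dvd_gcd_pow_sub_one hn (by omega) hw hs hp hpn).trans
        (Nat.gcd_dvd_right _ _))
      (four_dvd_pow_sub_one_of_four_dvd (by omega) hcop hs)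
  rw [Nat.cast_pow, orderOf_pow_of_dvd hs0 hsdvd] at hpow
  rw [← hpow, Nat.div_mul_cancel hsdvd]

end

theorem Finset.prod_X_sub_C_eq_sum_powersetCard {R σ : Type*} [CommRing R] (s : Finset σ)
    (r : σ → R) :
    ∏ i ∈ s, (X - C (r i)) = ∑ l ∈ Finset.range (s.card + 1),
      C ((-1) ^ (s.card - l) * ∑ t ∈ s.powersetCard (s.card - l), ∏ i ∈ t, r i) * X ^ l := by
  classical
  ext k
  simp only [finsetSum_coeff, coeff_C_mul_X_pow, Finset.sum_ite_eq, Finset.mem_range]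
  split_ifs with hk
  · have hprod : ∏ i ∈ s, (X - C (r i)) = ((s.val.map r).map fun t => X - C t).prod := by
      rw [Multiset.map_map]; rfl
    rw [hprod, Multiset.prod_X_sub_C_coeff _ (by simpa using Nat.lt_succ_iff.mp hk),
      Multiset.card_map, Finset.esymm_map_val, Finset.card_val]
  · refine coeff_eq_zero_of_natDegree_lt ((natDegree_prod_le _ _).trans_lt ?_)
    calc ∑ i ∈ s, (X - C (r i) : R[X]).natDegree ≤ ∑ _i ∈ s, 1 :=
          Finset.sum_le_sum fun i _ => natDegree_X_sub_C_le (r i)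
      _ < k := by simp only [Finset.sum_const, smul_eq_mul, mul_one]; omega

noncomputable def orbitPoly {R : Type*} [CommRing R] (q c : ℕ) (γ : R) : R[X] :=
  ∏ u ∈ Finset.range c, (X - C (γ ^ q ^ u))

theorem Spoly_eq_expand_orbitPoly {Ω : Type*} [Field Ω] (q e c : ℕ) (γ : Ω) :
    Spoly q e c γ = expand Ω e (orbitPoly q c γ) := by
  rw [Spoly, orbitPoly, Finset.prod_X_sub_C_eq_sum_powersetCard, Finset.card_range, map_sum]
  refine Finset.sum_congr rfl fun l _ => ?_
  rw [map_mul (expand Ω e), expand_C, map_pow, expand_X, pow_mul]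

theorem Polynomial.expand_cyclotomic_of_forall_prime_dvd {e m : ℕ}
    (h : ∀ p, p.Prime → p ∣ e → p ∣ m) (R : Type*) [CommRing R] :
    expand R e (cyclotomic m R) = cyclotomic (m * e) R := by
  induction e using induction_on_primes with
  | zero =>
    obtain ⟨p, hmp, hp⟩ := Nat.exists_infinite_primes (m + 1)
    obtain rfl : m = 0 := Nat.eq_zero_of_dvd_of_lt (h p hp (dvd_zero p)) (by omega)
    simp
  | one => simp
  | prime_mul p a hp ih =>
    rw [expand_mul, ih fun r hr hra => h r hr (hra.mul_left p), mul_comm p,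
      cyclotomic_expand_eq_cyclotomic hp ((h p hp (dvd_mul_right p a)).mul_right a), mul_assoc]

theorem IsPrimitiveRoot.prod_primitiveRoots {R M : Type*} [CommRing R] [IsDomain R] [CommMonoid M]
    {ζ : R} {m : ℕ} (hζ : IsPrimitiveRoot ζ m) (f : R → M) :
    ∏ μ ∈ primitiveRoots m R, f μ = ∏ j ∈ (Finset.range m).filter (·.Coprime m), f (ζ ^ j) := by
  rcases Nat.eq_zero_or_pos m with rfl | hm
  · simp
  have : NeZero m := ⟨hm.ne'⟩
  refine (Finset.prod_nbij (ζ ^ ·) ?_ ?_ ?_ fun _ _ => rfl).symm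
  · intro j hj
    simp only [Finset.mem_filter, Finset.mem_range] at hj
    exact (mem_primitiveRoots hm).mpr (hζ.pow_of_coprime j hj.2)
  · intro i hi j hj hij
    simp only [Finset.mem_coe, Finset.mem_filter, Finset.mem_range] at hi hj
    exact hζ.pow_inj hi.1 hj.1 hij
  · intro μ hμ
    obtain ⟨j, hjm, hj, rfl⟩ := hζ.isPrimitiveRoot_iff.mp ((mem_primitiveRoots hm).mp hμ)
    exact ⟨j, Finset.mem_filter.mpr ⟨Finset.mem_range.mpr hjm, hj⟩, rfl⟩

theorem IsPrimitiveRoot.pow_eq_pow_of_modEq {M : Type*} [CommMonoid M] {ζ : M} {k : ℕ}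
    (hζ : IsPrimitiveRoot ζ k) {a b : ℕ} (h : a ≡ b [MOD k]) : ζ ^ a = ζ ^ b := by
  rw [← pow_mod_orderOf, ← hζ.eq_orderOf, show a % k = b % k from h, hζ.eq_orderOf,
    pow_mod_orderOf]

theorem IsPrimitiveRoot.pow_pow_pow_eq_self {M : Type*} [CommMonoid M] {ζ : M} {m q s : ℕ}
    (hζ : IsPrimitiveRoot ζ m) (hs : orderOf (q : ZMod m) = s) (i : ℕ) :
    (ζ ^ i) ^ q ^ s = ζ ^ i := by
  have hqs : q ^ s ≡ 1 [MOD m] := (ZMod.natCast_eq_natCast_iff _ _ _).mp <| by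
    rw [Nat.cast_pow, Nat.cast_one, ← hs, pow_orderOf_eq_one]
  rw [← pow_mul, hζ.pow_eq_pow_of_modEq (by simpa using hqs.mul_left i)]

theorem bijOn_mul_pow_mod {q m s : ℕ} (hm : m ≠ 0) (hqm : q.Coprime m)
    (hords : orderOf (q : ZMod m) = s) {𝓒 : Finset ℕ}
    (h𝓒 : ∀ x ∈ Finset.range m, ∃! i, i ∈ 𝓒 ∧ ∃ j : ℕ, i * q ^ j % m = x) :
    Set.BijOn (fun p : ℕ × ℕ => p.1 * q ^ p.2 % m)
      ↑(𝓒.filter (·.Coprime m) ×ˢ Finset.range s) ↑((Finset.range m).filter (·.Coprime m)) := by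
  have hcast : ∀ a b : ℕ, a % m = b % m ↔ (a : ZMod m) = b := fun a b =>
    (ZMod.natCast_eq_natCast_iff' a b m).symm
  refine ⟨?_, ?_, ?_⟩
  · rintro ⟨i, u⟩ hiu
    simp only [Finset.coe_product, Set.mem_prod, Finset.mem_coe, Finset.mem_filter,
      Finset.mem_range] at hiu ⊢
    exact ⟨Nat.mod_lt _ (Nat.pos_of_ne_zero hm),
      (ZMod.coprime_mod_iff_coprime _ m).mpr (hiu.1.2.mul_left (hqm.pow_left u))⟩
  · rintro ⟨i, u⟩ hiu ⟨i', u'⟩ hiu' heq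
    simp only [Finset.coe_product, Set.mem_prod, Finset.mem_coe, Finset.mem_filter,
      Finset.mem_range] at hiu hiu' heq
    obtain ⟨x, -, hx⟩ :=
      h𝓒 _ (Finset.mem_range.mpr (Nat.mod_lt (i * q ^ u) (Nat.pos_of_ne_zero hm)))
    obtain rfl : i = i' := (hx i ⟨hiu.1.1, u, rfl⟩).trans (hx i' ⟨hiu'.1.1, u', heq.symm⟩).symm
    have hunit := (ZMod.isUnit_iff_coprime i m).mpr hiu.1.2
    rw [hcast, Nat.cast_mul, Nat.cast_mul, hunit.mul_right_inj, Nat.cast_pow, Nat.cast_pow] at heq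
    rw [pow_injOn_Iio_orderOf (hords ▸ hiu.2 : u < _) (hords ▸ hiu'.2 : u' < _) heq]
  · intro x hx
    simp only [Finset.mem_coe, Finset.mem_filter, Finset.mem_range] at hx
    obtain ⟨i, ⟨hi𝓒, j, hij⟩, -⟩ := h𝓒 x (Finset.mem_range.mpr hx.1)
    have hi : i.Coprime m := Nat.Coprime.coprime_mul_right
      ((ZMod.coprime_mod_iff_coprime _ m).mp (hij ▸ hx.2))
    have hs0 : 0 < s := Nat.pos_of_ne_zero (hords ▸ ZMod.orderOf_natCast_ne_zero hm hqm)
    refine ⟨(i, j % s), ?_, ?_⟩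
    · simpa [hi𝓒, Nat.mod_lt j hs0] using hi
    · rw [← hij]
      simp only [hcast, Nat.cast_mul, Nat.cast_pow, ← hords, pow_mod_orderOf]

theorem card_filter_coprime_eq_totient_div {q m s : ℕ} (hs : s ≠ 0) {𝓒 : Finset ℕ}
    (hbij : Set.BijOn (fun p : ℕ × ℕ => p.1 * q ^ p.2 % m)
      ↑(𝓒.filter (·.Coprime m) ×ˢ Finset.range s) ↑((Finset.range m).filter (·.Coprime m))) :
    (𝓒.filter (·.Coprime m)).card = Nat.totient m / s := by
  have hcard := hbij.finsetCard_eq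
  rw [Finset.card_product, Finset.card_range] at hcard
  rw [(Nat.totient_eq_card_coprime m).trans
    (congrArg Finset.card (Finset.filter_congr fun a _ => Nat.coprime_comm)), ← hcard,
    Nat.mul_div_cancel _ (Nat.pos_of_ne_zero hs)]

theorem cyclotomic_mul_eq_prod_expand_orbitPoly {K : Type*} [CommRing K] [IsDomain K]
    {q m e s : ℕ} (he : ∀ p, p.Prime → p ∣ e → p ∣ m) {𝓒 : Finset ℕ}
    (hbij : Set.BijOn (fun p : ℕ × ℕ => p.1 * q ^ p.2 % m)
      ↑(𝓒.filter (·.Coprime m) ×ˢ Finset.range s) ↑((Finset.range m).filter (·.Coprime m)))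
    {ζ : K} (hζ : IsPrimitiveRoot ζ m) :
    cyclotomic (m * e) K = ∏ i ∈ 𝓒.filter (·.Coprime m), expand K e (orbitPoly q s (ζ ^ i)) := by
  rw [← expand_cyclotomic_of_forall_prime_dvd he, cyclotomic_eq_prod_X_sub_primitiveRoots hζ,
    hζ.prod_primitiveRoots (fun μ => X - C μ),
    ← Finset.prod_nbij _ hbij.mapsTo hbij.injOn hbij.surjOn (fun _ _ => rfl), Finset.prod_product,
    map_prod]
  refine Finset.prod_congr rfl fun i _ => ?_
  rw [orbitPoly]
  refine congrArg _ (Finset.prod_congr rfl fun u _ => ?_)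
  rw [← pow_mul, hζ.pow_eq_pow_of_modEq (Nat.mod_modEq (i * q ^ u) m)]

theorem FiniteField.splits_X_pow_card_sub_X_self (F : Type*) [Field F] [Fintype F] :
    (X ^ Fintype.card F - X : F[X]).Splits := by
  rw [splits_iff_card_roots, FiniteField.roots_X_pow_card_sub_X,
    FiniteField.X_pow_card_sub_X_natDegree_eq F Fintype.one_lt_card]
  rfl

theorem FiniteField.mem_range_algebraMap_of_pow_card_eq_self {F K : Type*} [Field F] [Fintype F]
    [CommRing K] [IsDomain K] [Algebra F K] {c : K} (hc : c ^ Fintype.card F = c) :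
    c ∈ (algebraMap F K).range :=
  (splits_X_pow_card_sub_X_self F).mem_range_of_isRoot
    (FiniteField.X_pow_card_sub_X_ne_zero F Fintype.one_lt_card) (by simp [hc])

theorem Finset.prod_range_succ_eq_of_eq {M : Type*} [CommMonoid M] (f : ℕ → M) {n : ℕ}
    (h : f n = f 0) : ∏ i ∈ range n, f (i + 1) = ∏ i ∈ range n, f i := by
  cases n with
  | zero => simp
  | succ n => rw [prod_range_succ' f, prod_range_succ (fun i => f (i + 1)), h]

theorem orbitPoly_map_frobeniusAlgHom {F Ω : Type*} [Field F] [Fintype F] [Field Ω] [Algebra F Ω]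
    {s : ℕ} {γ : Ω} (hγ : γ ^ Fintype.card F ^ s = γ) :
    (orbitPoly (Fintype.card F) s γ).map (FiniteField.frobeniusAlgHom F Ω : Ω →+* Ω) =
      orbitPoly (Fintype.card F) s γ := by
  simp only [orbitPoly, Polynomial.map_prod, Polynomial.map_sub, map_X, map_C, RingHom.coe_coe,
    FiniteField.coe_frobeniusAlgHom, ← pow_mul, ← pow_succ]
  exact Finset.prod_range_succ_eq_of_eq (fun u => X - C (γ ^ Fintype.card F ^ u))
    (by rw [hγ, pow_zero, pow_one])

theorem exists_monic_map_eq_orbitPoly {F Ω : Type*} [Field F] [Fintype F] [Field Ω] [Algebra F Ω]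
    {s : ℕ} {γ : Ω} (hγ : γ ^ Fintype.card F ^ s = γ) :
    ∃ S : F[X], S.map (algebraMap F Ω) = orbitPoly (Fintype.card F) s γ ∧ S.Monic ∧
      S.natDegree = s := by
  have hlifts : orbitPoly (Fintype.card F) s γ ∈ lifts (algebraMap F Ω) := by
    refine lifts_iff_coeff_lifts _ |>.mpr fun k => ?_
    refine FiniteField.mem_range_algebraMap_of_pow_card_eq_self ?_
    simpa using congrArg (coeff · k) (orbitPoly_map_frobeniusAlgHom (F := F) hγ)
  obtain ⟨S, hS, hdeg, hmonic⟩ := lifts_and_natDegree_eq_and_monic hlifts (monic_prod_X_sub_C _ _)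
  exact ⟨S, hS, hmonic, by rw [hdeg, orbitPoly, natDegree_finsetProd_X_sub_C_eq_card,
    Finset.card_range]⟩

theorem FiniteField.irreducible_of_dvd_cyclotomic_of_natDegree {F : Type*} [Field F] [Fintype F]
    {n : ℕ} (hn : (Fintype.card F).Coprime n) {P : F[X]} (hP : P ∣ cyclotomic n F)
    (hdeg : P.natDegree = orderOf (Fintype.card F : ZMod n)) : Irreducible P := by
  obtain ⟨p, -, f, hp, hcard⟩ := FiniteField.card' F
  have : Fact p.Prime := ⟨hp⟩
  rw [hcard] at hn hdeg
  refine Polynomial.irreducible_of_dvd_cyclotomic_of_natDegree hcard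
    (Nat.Coprime.coprime_dvd_left (dvd_pow_self p f.ne_zero) hn) hP ?_
  rw [← orderOf_units, ZMod.coe_unitOfCoprime, hdeg]

theorem exists_irreducible_map_eq_Spoly {F Ω : Type*} [Field F] [Fintype F] [Field Ω]
    [Algebra F Ω] {n e s : ℕ} (hn : (Fintype.card F).Coprime n) (he : 0 < e) {γ : Ω}
    (hγ : γ ^ Fintype.card F ^ s = γ)
    (hdvd : Spoly (Fintype.card F) e s γ ∣ (cyclotomic n F).map (algebraMap F Ω))
    (hord : orderOf (Fintype.card F : ZMod n) = e * s) :
    ∃ S : F[X], S.map (algebraMap F Ω) = Spoly (Fintype.card F) e s γ ∧ S.Monic ∧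
      Irreducible S ∧ S.natDegree = e * s := by
  obtain ⟨S, hSmap, hSmonic, hSdeg⟩ := exists_monic_map_eq_orbitPoly hγ
  have hmap : (expand F e S).map (algebraMap F Ω) = Spoly (Fintype.card F) e s γ := by
    rw [map_expand, hSmap, Spoly_eq_expand_orbitPoly]
  have hdeg : (expand F e S).natDegree = e * s := by rw [natDegree_expand, hSdeg, mul_comm]
  refine ⟨expand F e S, hmap, hSmonic.expand he, ?_, hdeg⟩
  refine FiniteField.irreducible_of_dvd_cyclotomic_of_natDegree hn ?_ (hdeg.trans hord.symm)
  rwa [← map_dvd_map (algebraMap F Ω) (algebraMap F Ω).injective (hSmonic.expand he), hmap]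

theorem stmt15_general (q n : ℕ) (hn : 0 < n) (hcop : Nat.Coprime n q)
    (F Ω : Type*) [Field F] [Fintype F] [Field Ω] [Algebra F Ω]
    (hF : Fintype.card F = q)
    (w : ℕ) (hw : w = orderOf (q : ZMod (∏ p ∈ n.primeFactors, p)))
    (s : ℕ) (hs : s = if ¬ 4 ∣ n ∨ q ^ w % 4 = 1 then w else 2 * w)
    (d : ℕ → ℕ) (hd : ∀ t : ℕ, d t = Nat.gcd n (q ^ t - 1))
    -- `𝓒` is a complete set of representatives of the `q`-cyclotomic cosets modulo `d s`
    (𝓒 : Finset ℕ)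
    (h𝓒 : ∀ x ∈ Finset.range (d s), ∃! i, i ∈ 𝓒 ∧ ∃ j : ℕ, i * q ^ j % d s = x)
    (ζ : Ω) (hζ : IsPrimitiveRoot ζ (d s)) :
    (𝓒.filter (fun i => Nat.Coprime i (d s))).card = Nat.totient (d s) / s ∧
    ((Polynomial.cyclotomic n F).map (algebraMap F Ω) =
      ∏ i ∈ 𝓒.filter (fun i => Nat.Coprime i (d s)), Spoly q (n / d s) s (ζ ^ i)) ∧
    ∀ i ∈ 𝓒.filter (fun i => Nat.Coprime i (d s)),
      ∃ S : Polynomial F, S.map (algebraMap F Ω) = Spoly q (n / d s) s (ζ ^ i) ∧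
        S.Monic ∧ Irreducible S ∧ S.natDegree = (n / d s) * s := by
  classical
  subst hF
  have hq : 1 < Fintype.card F := Fintype.one_lt_card
  have hw0 := hw ▸ orderOf_natCast_prod_primeFactors_ne_zero hn.ne' hcop
  have hs0 : s ≠ 0 := by split_ifs at hs <;> omega
  have hmn : d s ∣ n := hd s ▸ Nat.gcd_dvd_left _ _
  have hm0 : d s ≠ 0 := ne_zero_of_dvd_ne_zero hn.ne' hmn
  have hms : orderOf (Fintype.card F : ZMod (d s)) = s :=
    hd s ▸ orderOf_natCast_gcd_pow_sub_one (by omega) hcop hw hs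
  have hbij := bijOn_mul_pow_mod hm0 (hcop.coprime_dvd_left hmn).symm hms h𝓒
  have hfactor : (cyclotomic n F).map (algebraMap F Ω) = ∏ i ∈ 𝓒.filter (·.Coprime (d s)),
      expand Ω (n / d s) (orbitPoly (Fintype.card F) s (ζ ^ i)) := by
    conv_lhs => rw [map_cyclotomic, ← Nat.mul_div_cancel' hmn]
    exact cyclotomic_mul_eq_prod_expand_orbitPoly (fun p hp hpe => hd s ▸
      prime_dvd_gcd_pow_sub_one hn.ne' (by omega) hw hs hp (hpe.trans (Nat.div_dvd_of_dvd hmn)))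
      hbij hζ
  refine ⟨card_filter_coprime_eq_totient_div hs0 hbij,
    by simp only [hfactor, Spoly_eq_expand_orbitPoly], fun i hi => ?_⟩
  refine exists_irreducible_map_eq_Spoly hcop.symm (Nat.div_pos (Nat.le_of_dvd hn hmn)
    (Nat.pos_of_ne_zero hm0)) (hζ.pow_pow_pow_eq_self hms i) ?_
    (hd s ▸ orderOf_natCast_eq_div_gcd_mul hn.ne' hq hcop hw hs hs0)
  rw [hfactor, Spoly_eq_expand_orbitPoly]
  exact Finset.dvd_prod_of_mem _ hi

/-- the closed formula for the factorization of the `n`-th cyclotomic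
polynomial `Φ_n` over `F_q` for any positive integer `n` with `gcd(n, q) = 1`:  `Φ_n`
factors into exactly `φ(d⁽ˢ⁾)/s` monic irreducible factors, each of degree `(n/d⁽ˢ⁾) s`. -/
theorem stmt15 (q n : ℕ) (hn : 0 < n) (hcop : Nat.Coprime n q)
    (F Ω : Type*) [Field F] [Fintype F] [Field Ω] [Algebra F Ω] [IsAlgClosed Ω]
    (hF : Fintype.card F = q)
    (w : ℕ) (hw : w = orderOf (q : ZMod (∏ p ∈ n.primeFactors, p)))
    (s : ℕ) (hs : s = if ¬ 4 ∣ n ∨ q ^ w % 4 = 1 then w else 2 * w)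
    (d : ℕ → ℕ) (hd : ∀ t : ℕ, d t = Nat.gcd n (q ^ t - 1))
    -- `𝓒` is a complete set of representatives of the `q`-cyclotomic cosets modulo `d s`
    (𝓒 : Finset ℕ) (h𝓒sub : 𝓒 ⊆ Finset.range (d s))
    (h𝓒 : ∀ x ∈ Finset.range (d s), ∃! i, i ∈ 𝓒 ∧ ∃ j : ℕ, i * q ^ j % d s = x)
    (ζ : Ω) (hζ : IsPrimitiveRoot ζ (d s)) :
    (𝓒.filter (fun i => Nat.Coprime i (d s))).card = Nat.totient (d s) / s ∧
    ((Polynomial.cyclotomic n F).map (algebraMap F Ω) =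
      ∏ i ∈ 𝓒.filter (fun i => Nat.Coprime i (d s)), Spoly q (n / d s) s (ζ ^ i)) ∧
    ∀ i ∈ 𝓒.filter (fun i => Nat.Coprime i (d s)),
      ∃ S : Polynomial F, S.map (algebraMap F Ω) = Spoly q (n / d s) s (ζ ^ i) ∧
        S.Monic ∧ Irreducible S ∧ S.natDegree = (n / d s) * s :=
  stmt15_general q n hn hcop F Ω hF w hw s hs d hd 𝓒 h𝓒 ζ hζ
end
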